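/- arXiv:1911.02100 — 9 statements merged into one kernel-verified Lean document; each statement's English description precedes it below -/
import Mathlib

section
/- For every integer k ≥ 1, the number of k-germs equals the k-th Catalan number C_k = (2k)!/(k!·(k+1)!). -/
/-!
Removing the top entry `v ≤ m` of a string counted by `IsBoundedGerm m` leaves a string counted
by `IsBoundedGerm (v + 1)`, so these numbers `N(n, m)` satisfy
`N(n + 1, m) = ∑_{v ≤ m} N(n, v + 1)`. Writing `c` for the Catalan generating function,
`c = 1 + X c²` telescopes to `c^(m+1) = 1 + X ∑_{v ≤ m} c^(v+2)`, so the coefficients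
`[X^n] c^(m+1)` obey the same recursion and `N(n, m) = [X^n] c^(m+1)`. The `k`-germs are the case
`n = k - 1`, `m = 1`, and `[X^(k-1)] c² = [X^k] c = C_k`.
-/

/-- A `k`-germ is a string `a_{k-1} a_{k-2} ⋯ a_2 a_1` of nonnegative integers with
`a_{k-1} ≤ 1` and `a_{i-1} ≤ a_i + 1` for `1 < i < k`.  We encode it as a function
`f : Fin (k-1) → ℕ` with `f j = a_{j+1}` (so index `j = k-2` is the leftmost entry). -/
def IsGerm (k : ℕ) (f : Fin (k - 1) → ℕ) : Prop :=
  (∀ j : Fin (k - 1), (j : ℕ) + 2 = k → f j ≤ 1) ∧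
  ∀ (j : Fin (k - 1)) (h : (j : ℕ) + 1 < k - 1), f j ≤ f ⟨(j : ℕ) + 1, h⟩ + 1

open Finset PowerSeries

def IsBoundedGerm (m : ℕ) {n : ℕ} (f : Fin n → ℕ) : Prop :=
  (∀ j : Fin n, (j : ℕ) + 1 = n → f j ≤ m) ∧
  ∀ (j : Fin n) (h : (j : ℕ) + 1 < n), f j ≤ f ⟨(j : ℕ) + 1, h⟩ + 1

theorem isBoundedGerm_snoc_iff {n m v : ℕ} {g : Fin n → ℕ} :
    IsBoundedGerm m (Fin.snoc g v : Fin (n + 1) → ℕ) ↔ v ≤ m ∧ IsBoundedGerm (v + 1) g := by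
  simp only [IsBoundedGerm, Fin.snoc, Fin.forall_iff, Fin.castLT_mk, cast_eq]
  constructor
  · rintro ⟨htop, hstep⟩
    refine ⟨by simpa using htop n, fun j hj hjn => ?_, fun j hj hjn => ?_⟩ <;>
      simpa [hj, hjn] using hstep j (by omega) (by omega)
  · rintro ⟨hv, htop, hstep⟩
    refine ⟨fun j hj hjn => ?_, fun j hj hjn => ?_⟩
    · simpa [show ¬ j < n by omega] using hv
    · by_cases hj1 : j + 1 < n
      · simpa [hj1, show j < n by omega] using hstep j (by omega) hj1
      · simpa [hj1, show j < n by omega] using htop j (by omega) (by omega)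

theorem isBoundedGerm_succ_iff {n m : ℕ} {f : Fin (n + 1) → ℕ} :
    IsBoundedGerm m f ↔ f (Fin.last n) ≤ m ∧ IsBoundedGerm (f (Fin.last n) + 1) (Fin.init f) := by
  conv_lhs => rw [← Fin.snoc_init_self f]
  exact isBoundedGerm_snoc_iff

def boundedGermSuccEquiv (n m : ℕ) :
    {f : Fin (n + 1) → ℕ // IsBoundedGerm m f} ≃
      Σ v : Fin (m + 1), {g : Fin n → ℕ // IsBoundedGerm (v + 1) g} where
  toFun f := ⟨⟨f.1 (Fin.last n), Nat.lt_succ_of_le (isBoundedGerm_succ_iff.mp f.2).1⟩,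
    ⟨Fin.init f.1, (isBoundedGerm_succ_iff.mp f.2).2⟩⟩
  invFun g := ⟨Fin.snoc g.2.1 g.1, isBoundedGerm_snoc_iff.mpr ⟨Nat.le_of_lt_succ g.1.2, g.2.2⟩⟩
  left_inv f := Subtype.ext (Fin.snoc_init_self f.1)
  right_inv _ := Sigma.subtype_ext (Fin.ext (Fin.snoc_last (α := fun _ => ℕ) _ _))
    (Fin.init_snoc (α := fun _ => ℕ) _ _)

instance (n m : ℕ) : Finite {f : Fin n → ℕ // IsBoundedGerm m f} := by
  induction n generalizing m with
  | zero => infer_instance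
  | succ n ih => exact Finite.of_equiv _ (boundedGermSuccEquiv n m).symm

theorem catalanSeries_pow_succ (m : ℕ) :
    catalanSeries ^ (m + 1) = 1 + X * ∑ v ∈ range (m + 1), catalanSeries ^ (v + 2) := by
  induction m with
  | zero => simpa [mul_comm, add_comm] using catalanSeries_sq_mul_X_add_one.symm
  | succ m ih =>
    calc catalanSeries ^ (m + 2) = catalanSeries ^ (m + 1) * (catalanSeries ^ 2 * X + 1) := by
          rw [catalanSeries_sq_mul_X_add_one, pow_succ]
      _ = catalanSeries ^ (m + 1) + X * catalanSeries ^ (m + 3) := by ring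
      _ = 1 + X * ∑ v ∈ range (m + 2), catalanSeries ^ (v + 2) := by
          rw [ih, sum_range_succ _ (m + 1)]; ring

theorem coeff_succ_catalanSeries_pow (n m : ℕ) :
    coeff (n + 1) (catalanSeries ^ (m + 1)) =
      ∑ v ∈ range (m + 1), coeff n (catalanSeries ^ (v + 2)) := by
  rw [catalanSeries_pow_succ, map_add, coeff_one, if_neg n.succ_ne_zero, zero_add,
    coeff_succ_X_mul, map_sum]

theorem card_boundedGerm (n m : ℕ) :
    Nat.card {f : Fin n → ℕ // IsBoundedGerm m f} = coeff n (catalanSeries ^ (m + 1)) := by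
  induction n generalizing m with
  | zero =>
    rw [coeff_zero_eq_constantCoeff_apply, map_pow, catalanSeries_constantCoeff, one_pow,
      Nat.card_eq_one_iff_exists]
    exact ⟨⟨Fin.elim0, nofun, nofun⟩, fun f => Subtype.ext (Subsingleton.elim _ _)⟩
  | succ n ih =>
    rw [Nat.card_congr (boundedGermSuccEquiv n m), Nat.card_sigma, coeff_succ_catalanSeries_pow,
      ← Fin.sum_univ_eq_sum_range]
    exact sum_congr rfl fun v _ => ih _

theorem catalan_eq_factorial_div (n : ℕ) :
    catalan n = (2 * n).factorial / (n.factorial * (n + 1).factorial) := by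
  rw [catalan_eq_centralBinom_div, Nat.centralBinom_eq_two_mul_choose,
    Nat.choose_eq_factorial_div_factorial (by omega), Nat.div_div_eq_div_mul,
    show 2 * n - n = n by omega, Nat.factorial_succ]
  congr 1
  ring

theorem isGerm_iff_isBoundedGerm {n : ℕ} (f : Fin n → ℕ) : IsGerm (n + 1) f ↔ IsBoundedGerm 1 f :=
  and_congr_left' (forall_congr' fun j => imp_congr_left (by omega))

/-- The number of `k`-germs equals the `k`-th Catalan number `(2k)!/(k!(k+1)!)`. -/
theorem stmt0 (k : ℕ) (hk : 1 ≤ k) :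
    Nat.card {f : Fin (k - 1) → ℕ // IsGerm k f} =
      (2 * k).factorial / (k.factorial * (k + 1).factorial) := by
  obtain ⟨n, rfl⟩ := Nat.exists_eq_add_of_le' hk
  rw [← catalan_eq_factorial_div]
  calc Nat.card {f : Fin (n + 1 - 1) → ℕ // IsGerm (n + 1) f}
      = Nat.card {f : Fin n → ℕ // IsBoundedGerm 1 f} :=
        Nat.card_congr (Equiv.subtypeEquivRight isGerm_iff_isBoundedGerm)
    _ = coeff n (catalanSeries ^ 2) := card_boundedGerm n 1
    _ = catalan (n + 1) := by simpa using (coeff_succ_catalanSeries_pow n 0).symm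
end

section
/- For every integer k ≥ 1 and n = 2k+1, the number of orbits of the translation action of Z_n on the k-element subsets of Z_n (where i ∈ Z_n sends A to A + i = { a + i mod n : a ∈ A }) equals the k-th Catalan number C_k = (2k)!/(k!·(k+1)!). -/
/-!
Translating a `k`-subset `A` by `i` shifts the sum of its elements by `k • i`, so when `k` is
coprime to `n = |G|` no nonzero translation fixes a `k`-subset. The translation action on
`k`-subsets is therefore free, every orbit has exactly `n` elements, and for `n = 2k + 1` the
number of orbits is `C(2k+1, k) / (2k+1) = (2k)! / (k! (k+1)!)`, the Catalan number.
-/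

open Finset AddAction
open scoped Pointwise

variable {G : Type*} [AddCommGroup G] [DecidableEq G]

theorem Finset.card_nsmul_eq_zero_of_vadd_eq {A : Finset G} {i : G} (h : i +ᵥ A = A) :
    #A • i = 0 := by
  have hsum : ∑ a ∈ i +ᵥ A, a = ∑ a ∈ A, a := by rw [h]
  simp only [vadd_finset_def, vadd_eq_add] at hsum
  rw [sum_image fun _ _ _ _ ↦ add_left_cancel, sum_add_distrib, sum_const] at hsum
  exact add_eq_right.mp hsum

namespace Set.powersetCard

theorem addAction_stabilizer_eq_bot {k : ℕ} (hk : (Nat.card G).Coprime k)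
    (s : Set.powersetCard G k) : stabilizer G s = ⊥ := by
  refine (AddSubgroup.eq_bot_iff_forall _).mpr fun i hi ↦ hk.nsmul_right_bijective.injective ?_
  have hi : i +ᵥ (s : Finset G) = s := by rw [← coe_vadd, mem_stabilizer_iff.mp hi]
  simpa [card_eq] using card_nsmul_eq_zero_of_vadd_eq hi

theorem card_orbitRel_quotient_mul_card {k : ℕ} (hk : (Nat.card G).Coprime k) :
    Nat.card (orbitRel.Quotient G (Set.powersetCard G k)) * Nat.card G =
      (Nat.card G).choose k := by
  rw [← Nat.card_prod,
    ← Nat.card_congr (selfEquivOrbitsQuotientProd (addAction_stabilizer_eq_bot hk)),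
    Set.powersetCard.card]

theorem image_val_orbit {k : ℕ} (s : Set.powersetCard G k) :
    Subtype.val '' orbit G s = {B | ∃ i : G, B = (s : Finset G).image (· + i)} := by
  ext B
  simp only [Set.mem_image, mem_orbit_iff, Set.mem_ofPred_eq]
  constructor
  · rintro ⟨_, ⟨i, rfl⟩, rfl⟩
    exact ⟨i, by simp [vadd_finset_def, add_comm]⟩
  · rintro ⟨i, rfl⟩
    exact ⟨i +ᵥ s, ⟨i, rfl⟩, by simp [vadd_finset_def, add_comm]⟩

end Set.powersetCard

theorem card_translationOrbits_mul_card {k : ℕ} (hk : (Nat.card G).Coprime k) :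
    Nat.card {O : Set (Finset G) //
      ∃ A : Finset G, A.card = k ∧ O = {B | ∃ i : G, B = A.image (· + i)}} * Nat.card G =
      (Nat.card G).choose k := by
  have hrange : {O : Set (Finset G) |
      ∃ A : Finset G, A.card = k ∧ O = {B | ∃ i : G, B = A.image (· + i)}} =
      Set.range fun q : orbitRel.Quotient G (Set.powersetCard G k) ↦ Subtype.val '' q.orbit := by
    ext O
    constructor
    · rintro ⟨A, hA, rfl⟩
      exact ⟨Quotient.mk'' (Set.powersetCard.ofCard hA), Set.powersetCard.image_val_orbit _⟩
    · rintro ⟨q, rfl⟩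
      induction q using Quotient.inductionOn with
      | h s => exact ⟨s, s.2, Set.powersetCard.image_val_orbit s⟩
  have hinj : Function.Injective
      fun q : orbitRel.Quotient G (Set.powersetCard G k) ↦ Subtype.val '' q.orbit :=
    (Set.image_injective.mpr Subtype.val_injective).comp orbitRel.Quotient.orbit_injective
  rw [← Set.coe_ofPred, hrange, Nat.card_range_of_injective hinj,
    Set.powersetCard.card_orbitRel_quotient_mul_card hk]

theorem stmt3_general (k : ℕ) :
    Nat.card {O : Set (Finset (ZMod (2 * k + 1))) //
      ∃ A : Finset (ZMod (2 * k + 1)), A.card = k ∧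
        O = {B | ∃ i : ZMod (2 * k + 1), B = A.image (· + i)}} =
      (2 * k).factorial / (k.factorial * (k + 1).factorial) := by
  have hcoprime : (2 * k + 1).Coprime k :=
    (Nat.coprime_mul_right_add_left 1 k 2).mpr (Nat.coprime_one_left k)
  have hcount := card_translationOrbits_mul_card (G := ZMod (2 * k + 1)) (k := k)
    (by rwa [Nat.card_zmod])
  rw [Nat.card_zmod] at hcount
  have hchoose : (2 * k + 1).choose k * (k.factorial * (k + 1).factorial) =
      (2 * k + 1) * (2 * k).factorial := by
    have := Nat.choose_mul_factorial_mul_factorial (show k ≤ 2 * k + 1 by omega)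
    rwa [show 2 * k + 1 - k = k + 1 by omega, mul_assoc, Nat.factorial_succ] at this
  refine Nat.eq_div_of_mul_eq_left (by positivity)
    (Nat.eq_of_mul_eq_mul_left (by omega : 0 < 2 * k + 1) ?_)
  rw [← hchoose, ← hcount]
  ring

/-- The number of orbits of the translation action of `ZMod (2k+1)` on the `k`-element
subsets of `ZMod (2k+1)` equals the `k`-th Catalan number `(2k)!/(k!(k+1)!)`.
An orbit is a set of the form `{B | ∃ i, B = A + i}` for some `k`-subset `A`. -/
theorem stmt3 (k : ℕ) (hk : 1 ≤ k) :
    Nat.card {O : Set (Finset (ZMod (2 * k + 1))) //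
      ∃ A : Finset (ZMod (2 * k + 1)), A.card = k ∧
        O = {B | ∃ i : ZMod (2 * k + 1), B = A.image (· + i)}} =
      (2 * k).factorial / (k.factorial * (k + 1).factorial) :=
  stmt3_general k
end

section
/- Let k ≥ 1 and n = 2k+1. There is a group homomorphism φ from the dihedral group of order 2n into the automorphism group of the middle-levels graph M_k such that φ sends the rotation generator to the translation automorphism A ↦ A + 1 = { a + 1 mod n : a ∈ A } and sends a reflection generator to the complemented reversal ℵ. Moreover, the resulting action of the dihedral group on the vertices of M_k is free: every nonidentity element of the dihedral group moves every vertex. -/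
/-- Vertices of the middle-levels graph: the `k`- and `(k+1)`-element subsets of
`ZMod (2k+1)`. -/
abbrev Vert (k : ℕ) := {A : Finset (ZMod (2 * k + 1)) // A.card = k ∨ A.card = k + 1}

/-- The middle-levels graph `M_k`: `A` is adjacent to `A′` iff one strictly contains
the other. -/
def middleLevels (k : ℕ) : SimpleGraph (Vert k) where
  Adj A B := A.1 ⊂ B.1 ∨ B.1 ⊂ A.1
  symm := ⟨fun _ _ h => h.symm⟩
  loopless := ⟨fun _ h => h.elim (fun h' => ssubset_irrefl _ h') (fun h' => ssubset_irrefl _ h')⟩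

/-- The complemented reversal `ℵ(A) = { n−1−j : j ∈ Z_n \ A }` on subsets of `Z_n`. -/
def aleph (n : ℕ) [NeZero n] (A : Finset (ZMod n)) : Finset (ZMod n) :=
  Aᶜ.image (fun j => (n : ZMod n) - 1 - j)

/-!
The rotation `r i` translates a subset of `ZMod n` by `i`, and the reflection `sr i` complements
it and then applies `x ↦ -1 - i - x`. Complementation commutes with images under bijections, so
this is an action of the dihedral group on subsets; it preserves strict inclusion up to reversal
and, for `n = 2k + 1`, swaps the two middle levels. The action on the middle levels is free: if
`A + i = A` then summing the elements gives `|A| • i = 0`, and `|A| ∈ {k, k + 1}` is prime to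
`2k + 1`; a reflection fixing `A` would force `|A| = |Aᶜ|`, impossible as `n` is odd.
-/

theorem Finset.image_compl_of_injective {α : Type*} [Fintype α] [DecidableEq α] {f : α → α}
    (hf : Function.Injective f) (s : Finset α) : sᶜ.image f = (s.image f)ᶜ :=
  Finset.coe_injective <| by push_cast; exact Set.image_compl_eq hf.bijective_of_finite

theorem Finset.card_nsmul_eq_zero_of_image_add_eq {G : Type*} [AddCommGroup G] [DecidableEq G]
    {s : Finset G} {g : G} (h : s.image (· + g) = s) : s.card • g = 0 := by
  have hsum := congrArg (fun t => ∑ x ∈ t, x) h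
  simp only [Finset.sum_image (add_left_injective g).injOn, Finset.sum_add_distrib,
    Finset.sum_const] at hsum
  exact add_eq_left.mp hsum

theorem ZMod.eq_zero_of_image_add_eq {n : ℕ} {s : Finset (ZMod n)} {g : ZMod n}
    (h : s.image (· + g) = s) (hs : s.card.Coprime n) : g = 0 := by
  have hg := Finset.card_nsmul_eq_zero_of_image_add_eq h
  rw [nsmul_eq_mul] at hg
  exact ((ZMod.isUnit_iff_coprime _ _).mpr hs).mul_right_eq_zero.mp hg

namespace MiddleLevels

open DihedralGroup

section Finset

variable {n : ℕ} [NeZero n]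

-- The constant `-1` makes `sr 0` the map `ℵ`, since `n = 0` in `ZMod n`.
instance : SMul (DihedralGroup n) (Finset (ZMod n)) where
  smul
    | r i, A => A.image (· + i)
    | sr i, A => Aᶜ.image (-1 - i - ·)

theorem r_smul (i : ZMod n) (A : Finset (ZMod n)) : r i • A = A.image (· + i) := rfl

theorem sr_smul (i : ZMod n) (A : Finset (ZMod n)) : sr i • A = Aᶜ.image (-1 - i - ·) := rfl

theorem sr_zero_smul (A : Finset (ZMod n)) : (sr 0 : DihedralGroup n) • A = aleph n A := by
  simp only [sr_smul, aleph, ZMod.natCast_self, zero_sub, sub_zero]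

instance : MulAction (DihedralGroup n) (Finset (ZMod n)) where
  one_smul A := by rw [one_def, r_smul]; simp
  mul_smul := by
    rintro (i | i) (j | j) A <;>
      simp only [r_mul_r, r_mul_sr, sr_mul_r, sr_mul_sr, r_smul, sr_smul,
        ← Finset.image_compl_of_injective (add_left_injective j),
        ← Finset.image_compl_of_injective sub_right_injective,
        compl_compl, Finset.image_image] <;>
      exact Finset.image_congr fun x _ => by simp only [Function.comp_apply]; ring

theorem card_r_smul (i : ZMod n) (A : Finset (ZMod n)) : (r i • A).card = A.card :=
  Finset.card_image_of_injective _ (add_left_injective i)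

theorem card_sr_smul (i : ZMod n) (A : Finset (ZMod n)) : (sr i • A).card = n - A.card := by
  rw [sr_smul, Finset.card_image_of_injective _ sub_right_injective,
    Finset.card_compl, ZMod.card]

theorem r_smul_ssubset_r_smul_iff (i : ZMod n) (A B : Finset (ZMod n)) :
    r i • A ⊂ r i • B ↔ A ⊂ B :=
  Finset.image_ssubset_image (add_left_injective i)

theorem sr_smul_ssubset_sr_smul_iff (i : ZMod n) (A B : Finset (ZMod n)) :
    sr i • A ⊂ sr i • B ↔ B ⊂ A := by
  rw [sr_smul, sr_smul, Finset.image_ssubset_image sub_right_injective, Finset.compl_ssubset_compl]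

end Finset

variable (k : ℕ)

theorem card_smul_mem_middle (g : DihedralGroup (2 * k + 1)) (v : Vert k) :
    (g • v.1).card = k ∨ (g • v.1).card = k + 1 := by
  rcases g with i | i
  · rw [card_r_smul]; exact v.2
  · rw [card_sr_smul]; omega

instance : MulAction (DihedralGroup (2 * k + 1)) (Vert k) where
  smul g v := ⟨g • v.1, card_smul_mem_middle k g v⟩
  one_smul v := Subtype.ext (one_smul _ v.1)
  mul_smul g h v := Subtype.ext (mul_smul g h v.1)

theorem coe_smul (g : DihedralGroup (2 * k + 1)) (v : Vert k) : (g • v).1 = g • v.1 := rfl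

theorem adj_smul_iff (g : DihedralGroup (2 * k + 1)) (v w : Vert k) :
    (middleLevels k).Adj (g • v) (g • w) ↔ (middleLevels k).Adj v w := by
  rcases g with i | i
  · simp only [middleLevels, coe_smul, r_smul_ssubset_r_smul_iff]
  · simp only [middleLevels, coe_smul, sr_smul_ssubset_sr_smul_iff, or_comm]

theorem card_coprime (v : Vert k) : v.1.card.Coprime (2 * k + 1) := by
  rcases v.2 with h | h <;> rw [h]
  · rw [two_mul, add_assoc, Nat.coprime_self_add_right, Nat.coprime_self_add_right]
    exact Nat.coprime_one_right k
  · rw [show 2 * k + 1 = (k + 1) + k by ring, Nat.coprime_self_add_right,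
      Nat.coprime_self_add_left]
    exact Nat.coprime_one_left k

theorem smul_ne_self {g : DihedralGroup (2 * k + 1)} (hg : g ≠ 1) (v : Vert k) : g • v ≠ v := by
  intro hv
  have hfix : g • v.1 = v.1 := congrArg Subtype.val hv
  rcases g with i | i
  · exact hg (congrArg r (ZMod.eq_zero_of_image_add_eq hfix (card_coprime k v)))
  · have hcard := card_sr_smul i v.1
    rw [hfix] at hcard
    rcases v.2 with h | h <;> omega

end MiddleLevels

theorem stmt6_general (k : ℕ) :
    ∃ φ : DihedralGroup (2 * k + 1) →* Equiv.Perm (Vert k),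
      (∀ g : DihedralGroup (2 * k + 1), ∀ v w : Vert k,
        (middleLevels k).Adj (φ g v) (φ g w) ↔ (middleLevels k).Adj v w) ∧
      (∀ v : Vert k, (φ (DihedralGroup.r 1) v).1 = v.1.image (· + 1)) ∧
      (∀ v : Vert k, (φ (DihedralGroup.sr 0) v).1 = aleph (2 * k + 1) v.1) ∧
      (∀ g : DihedralGroup (2 * k + 1), g ≠ 1 → ∀ v : Vert k, φ g v ≠ v) :=
  ⟨MulAction.toPermHom _ _, MiddleLevels.adj_smul_iff k, fun _ => rfl,
    fun v => MiddleLevels.sr_zero_smul v.1, fun _ hg => MiddleLevels.smul_ne_self k hg⟩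

/-- There is a homomorphism `φ` of the dihedral group of order `2(2k+1)` into the
permutations of the vertices of `M_k` whose image consists of automorphisms of `M_k`,
sending the rotation generator `r 1` to translation `A ↦ A + 1` and the reflection
generator `sr 0` to the complemented reversal `ℵ`; moreover the resulting action is
free: every nonidentity element moves every vertex. -/
theorem stmt6 (k : ℕ) (hk : 1 ≤ k) :
    ∃ φ : DihedralGroup (2 * k + 1) →* Equiv.Perm (Vert k),
      (∀ g : DihedralGroup (2 * k + 1), ∀ v w : Vert k,
        (middleLevels k).Adj (φ g v) (φ g w) ↔ (middleLevels k).Adj v w) ∧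
      (∀ v : Vert k, (φ (DihedralGroup.r 1) v).1 = v.1.image (· + 1)) ∧
      (∀ v : Vert k, (φ (DihedralGroup.sr 0) v).1 = aleph (2 * k + 1) v.1) ∧
      (∀ g : DihedralGroup (2 * k + 1), g ≠ 1 → ∀ v : Vert k, φ g v ≠ v) :=
  stmt6_general k
end

section
/- Let k ≥ 1 and n = 2k+1, and let w : Z_n → {0,1} be any binary string indexed by Z_n. Then the number of rotations j ∈ Z_n for which the rotated string c defined by c(m) = w(m + j) satisfies c(k) = 0 and c(k − i) = 1 − c(k + i) for all i = 1, …, k is at most 2. (Equivalently, any cyclic equivalence class of binary (2k+1)-strings contains at most two representatives of the anti-palindromic form b̄_k ⋯ b̄_1 0 b_1 ⋯ b_k; hence every horizontal edge of the quotient of the middle-levels graph by translations has multiplicity 1 or 2.) -/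
/-!
A rotation of the required form is an anti-palindrome centred at some position `t` of `w`:
`w t = 0` and `w (2t - a) = 1 - w a` for every `a ≠ t`. Composing the reflections about two
such centres `S ≠ T` gives the translation by `2(T - S)`, under which `w` is invariant away from
two points. Applying this at the reflection of `T` about a third centre `U` contradicts the
values that the reflection about `U` forces.
-/

section AntiCenter

variable {G R : Type*} [AddCommGroup G] [CommRing R]

def IsAntiCenter (w : G → R) (t : G) : Prop :=
  w t = 0 ∧ ∀ a, a ≠ t → w a + w (2 • t - a) = 1

namespace IsAntiCenter

variable {w : G → R} {S T U : G}

lemma apply_reflect (hS : IsAntiCenter w S) {a : G} (ha : a ≠ S) :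
    w (2 • S - a) = 1 - w a := by
  linear_combination hS.2 a ha

lemma apply_reflect_center (hS : IsAntiCenter w S) (hT : IsAntiCenter w T) (hTS : T ≠ S) :
    w (2 • S - T) = 1 := by
  rw [hS.apply_reflect hTS, hT.1, sub_zero]

/-- The composition of the reflections about `S` and `T` is the translation by `2 • (T - S)`. -/
lemma apply_add_two_nsmul_sub (hS : IsAntiCenter w S) (hT : IsAntiCenter w T) {y : G}
    (hyS : y ≠ S) (hyT : y ≠ 2 • S - T) : w (y + 2 • (T - S)) = w y := by
  have hy' : 2 • S - y ≠ T := fun h => hyT (by rw [← h]; abel)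
  have h := hT.apply_reflect hy'
  rw [show 2 • T - (2 • S - y) = y + 2 • (T - S) by abel, hS.apply_reflect hyS] at h
  rw [h]
  ring

variable [Nontrivial R]

lemma eq_or_eq_of_ne (hS : IsAntiCenter w S) (hT : IsAntiCenter w T) (hTS : T ≠ S)
    (hU : IsAntiCenter w U) : U = S ∨ U = T := by
  by_contra! hne
  obtain ⟨hUS, hUT⟩ := hne
  have hST : w (2 • S - T) = 1 := hS.apply_reflect_center hT hTS
  have hUS' : w (2 • U - S) = 1 := hU.apply_reflect_center hS hUS.symm
  have hUT' : w (2 • U - T) = 1 := hU.apply_reflect_center hT hUT.symm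
  have hU_ne : 2 • S - T ≠ U := fun h => by simp [h, hU.1] at hST
  have hUST : w (2 • U - (2 • S - T)) = 0 := by
    rw [hU.apply_reflect hU_ne, hST, sub_self]
  have hyS : 2 • U - T ≠ S := fun h => by
    rw [show 2 • U - S = T by rw [← h]; abel, hT.1] at hUS'
    exact zero_ne_one hUS'
  have hyT : 2 • U - T ≠ 2 • S - T := fun h => by
    rw [show 2 • U - S = S by rw [sub_left_inj.mp h, two_nsmul]; abel, hS.1] at hUS'
    exact zero_ne_one hUS'
  have h := hS.apply_add_two_nsmul_sub hT hyS hyT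
  rw [show 2 • U - T + 2 • (T - S) = 2 • U - (2 • S - T) by abel, hUST, hUT'] at h
  exact zero_ne_one h

end IsAntiCenter

end AntiCenter

/-- The conditions for `i = 1, …, k` already cover every `a ≠ t + j`, since `a - (t + j)` is
`±i` for some such `i`. -/
lemma isAntiCenter_of_forall_Icc {R : Type*} [CommRing R] {k : ℕ} {w : ZMod (2 * k + 1) → R}
    {t j : ZMod (2 * k + 1)} (h0 : w (t + j) = 0)
    (h : ∀ i ∈ Finset.Icc 1 k, w (t - i + j) = 1 - w (t + i + j)) :
    IsAntiCenter w (t + j) := by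
  refine ⟨h0, fun a ha => ?_⟩
  set z := a - (t + j) with hz
  have hz0 : z.val ≠ 0 := by rwa [ne_eq, ZMod.val_eq_zero, sub_eq_zero]
  have hzv : ((z.val : ℕ) : ZMod (2 * k + 1)) = z := ZMod.natCast_zmod_val z
  have hzlt : z.val < 2 * k + 1 := ZMod.val_lt z
  by_cases hzk : z.val ≤ k
  · have h1 := h z.val (Finset.mem_Icc.mpr ⟨by omega, hzk⟩)
    rw [hzv, show t - z + j = 2 • (t + j) - a by rw [hz]; abel,
      show t + z + j = a by rw [hz]; abel] at h1
    linear_combination h1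
  · have h1 := h (2 * k + 1 - z.val) (Finset.mem_Icc.mpr ⟨by omega, by omega⟩)
    have hcast : ((2 * k + 1 - z.val : ℕ) : ZMod (2 * k + 1)) = -z := by
      rw [Nat.cast_sub hzlt.le, hzv, ZMod.natCast_self, zero_sub]
    rw [hcast, show t - -z + j = a by rw [hz]; abel,
      show t + -z + j = 2 • (t + j) - a by rw [hz]; abel] at h1
    linear_combination h1

open scoped Classical in
theorem stmt8_general (k : ℕ) (w : ZMod (2 * k + 1) → ZMod 2) :
    (Finset.univ.filter (fun j : ZMod (2 * k + 1) =>
      w ((k : ZMod (2 * k + 1)) + j) = 0 ∧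
      ∀ i ∈ Finset.Icc 1 k,
        w ((k : ZMod (2 * k + 1)) - (i : ZMod (2 * k + 1)) + j) =
          1 - w ((k : ZMod (2 * k + 1)) + (i : ZMod (2 * k + 1)) + j))).card ≤ 2 := by
  by_contra! hcard
  obtain ⟨a, b, c, ha, hb, hc, hab, hac, hbc⟩ := Finset.two_lt_card_iff.mp hcard
  simp only [Finset.mem_filter, Finset.mem_univ, true_and] at ha hb hc
  have hba : (k : ZMod (2 * k + 1)) + b ≠ k + a := fun h => hab (add_left_cancel h).symm
  rcases (isAntiCenter_of_forall_Icc ha.1 ha.2).eq_or_eq_of_ne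
      (isAntiCenter_of_forall_Icc hb.1 hb.2) hba (isAntiCenter_of_forall_Icc hc.1 hc.2) with h | h
  · exact hac (add_left_cancel h).symm
  · exact hbc (add_left_cancel h).symm

open scoped Classical in
/-- Any binary string `w` of length `n = 2k+1` (indexed by `Z_n`) has at most two
rotations `c = w(· + j)` of the anti-palindromic form
`c(k) = 0` and `c(k−i) = 1 − c(k+i)` for `i = 1, …, k`. -/
theorem stmt8 (k : ℕ) (hk : 1 ≤ k) (w : ZMod (2 * k + 1) → ZMod 2) :
    (Finset.univ.filter (fun j : ZMod (2 * k + 1) =>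
      w ((k : ZMod (2 * k + 1)) + j) = 0 ∧
      ∀ i ∈ Finset.Icc 1 k,
        w ((k : ZMod (2 * k + 1)) - (i : ZMod (2 * k + 1)) + j) =
          1 - w ((k : ZMod (2 * k + 1)) + (i : ZMod (2 * k + 1)) + j))).card ≤ 2 :=
  stmt8_general k w
end

section
/- Let k ≥ 1, n = 2k+1, and let S be a k-element subset of Z_n. Then the lexical-color map x ↦ c(x, S) is a bijection from the complement Z_n \ S (which has k+1 elements) onto the color set {0, 1, …, k}. -/
/-- The cyclic interval `[y, x) = {y, y+1, …, x−1}` in `Z_n` (empty if `y = x`). -/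
def cycInterval (n : ℕ) [NeZero n] (y x : ZMod n) : Finset (ZMod n) :=
  Finset.univ.filter (fun z => (z - y).val < (x - y).val)

/-- The lexical color of `x ∉ S` relative to `S`:
`c(x,S) = |{ y ∈ (Z_n \ S) \ {x} : |[y,x) ∩ S| < |[y,x) ∩ (Z_n \ S)| }|`. -/
def lexColor (n : ℕ) [NeZero n] (S : Finset (ZMod n)) (x : ZMod n) : ℕ :=
  ((Sᶜ.erase x).filter
    (fun y => (cycInterval n y x ∩ S).card < (cycInterval n y x ∩ Sᶜ).card)).card

/-!
Let `balance S m` be the number of non-members minus the number of members of `S` among the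
residues `0, …, m - 1`. The surplus of non-members over members of `S` on the cyclic interval
`[y, x)` is `balance S x - balance S y`, plus `|Z_n \ S| - |S| = 1` when the interval wraps
around (`x < y`). So `y` is counted in `c(x, S)` exactly when
`(balance S y, -y) < (balance S x, -x)` lexicographically, i.e. `c(x, S)` is the rank of `x`
among the non-members of `S` for an injective key, and ranks biject onto `{0, …, k}`.
-/

open Finset

theorem Finset.card_filter_lt_lt_of_lt {α β : Type*} [Preorder β] [DecidableLT β]
    {f : α → β} {s : Finset α} {x y : α} (hx : x ∈ s) (hxy : f x < f y) :
    #{z ∈ s | f z < f x} < #{z ∈ s | f z < f y} :=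
  card_lt_card ⟨monotone_filter_right s fun _ _ hz => hz.trans hxy,
    fun h => lt_irrefl (f x) (mem_filter.1 (h (mem_filter.2 ⟨hx, hxy⟩))).2⟩

theorem Finset.bijOn_card_filter_lt {α β : Type*} [LinearOrder β] {f : α → β} {s : Finset α}
    (hf : Set.InjOn f s) :
    Set.BijOn (fun x => #{y ∈ s | f y < f x}) s (Set.Iio #s) := by
  have hmaps : Set.MapsTo (fun x => #{y ∈ s | f y < f x}) s (Set.Iio #s) := fun x hx =>
    card_lt_card ⟨filter_subset _ s, fun h => lt_irrefl (f x) (mem_filter.1 (h hx)).2⟩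
  have hinj : Set.InjOn (fun x => #{y ∈ s | f y < f x}) s := by
    intro x hx y hy hxy
    rcases lt_trichotomy (f x) (f y) with h | h | h
    · exact absurd hxy (card_filter_lt_lt_of_lt hx h).ne
    · exact hf hx hy h
    · exact absurd hxy (card_filter_lt_lt_of_lt hy h).ne'
  refine ⟨hmaps, hinj, ?_⟩
  simpa using surjOn_of_injOn_of_card_le (t := range #s) _ (by simpa using hmaps) hinj (by simp)

variable {n : ℕ} [NeZero n]

theorem ZMod.val_sub_eq_ite (a b : ZMod n) :
    (a - b).val = if b.val ≤ a.val then a.val - b.val else a.val + n - b.val := by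
  split_ifs with h
  · exact ZMod.val_sub h
  · push Not at h
    have : NeZero (b - a) := ⟨sub_ne_zero.2 fun hba => h.ne (congrArg ZMod.val hba).symm⟩
    rw [← neg_sub, ZMod.val_neg_of_ne_zero, ZMod.val_sub h.le]
    have := ZMod.val_lt b
    omega

theorem ite_mem_cycInterval (y x z : ZMod n) :
    (if z ∈ cycInterval n y x then 1 else 0 : ℤ) =
      (if z.val < x.val then 1 else 0) - (if z.val < y.val then 1 else 0) +
        (if x.val < y.val then 1 else 0) := by
  have := ZMod.val_lt z; have := ZMod.val_lt x; have := ZMod.val_lt y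
  simp only [cycInterval, mem_filter, mem_univ, true_and, ZMod.val_sub_eq_ite]
  split_ifs <;> omega

def countBelow (A : Finset (ZMod n)) (m : ℕ) : ℕ := #{z ∈ A | z.val < m}

theorem card_cycInterval_inter (A : Finset (ZMod n)) (y x : ZMod n) :
    (#(cycInterval n y x ∩ A) : ℤ) =
      countBelow A x.val - countBelow A y.val + if x.val < y.val then (#A : ℤ) else 0 := by
  rw [inter_comm, ← filter_mem_eq_inter, countBelow, countBelow, natCast_card_filter,
    natCast_card_filter, natCast_card_filter, ← sum_sub_distrib]
  split_ifs with hxy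
  · rw [← nsmul_one, ← sum_const, ← sum_add_distrib]
    exact sum_congr rfl fun z _ => by rw [ite_mem_cycInterval, if_pos hxy]
  · rw [add_zero]
    exact sum_congr rfl fun z _ => by rw [ite_mem_cycInterval, if_neg hxy, add_zero]

def balance (S : Finset (ZMod n)) (m : ℕ) : ℤ := countBelow Sᶜ m - countBelow S m

def lexKey (S : Finset (ZMod n)) (z : ZMod n) : ℤ ×ₗ ℤ :=
  toLex (balance S z.val, -(z.val : ℤ))

theorem lexKey_injective (S : Finset (ZMod n)) : Function.Injective (lexKey S) := by
  intro y x h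
  have h2 := congrArg (fun p => (ofLex p).2) h
  simp only [lexKey, ofLex_toLex, neg_inj, Nat.cast_inj] at h2
  exact ZMod.val_injective n h2

theorem lexKey_lt_lexKey_iff {S : Finset (ZMod n)} (hn : 2 * #S + 1 = n) (y x : ZMod n) :
    lexKey S y < lexKey S x ↔ #(cycInterval n y x ∩ S) < #(cycInterval n y x ∩ Sᶜ) := by
  have hSc : #Sᶜ = #S + 1 := by rw [card_compl, ZMod.card]; omega
  have h := card_cycInterval_inter S y x
  have hc := card_cycInterval_inter Sᶜ y x
  rw [hSc] at hc
  simp only [lexKey, balance, Prod.Lex.toLex_lt_toLex]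
  split_ifs at h hc <;> omega

theorem lexColor_eq_card_filter_lexKey_lt {S : Finset (ZMod n)} (hn : 2 * #S + 1 = n)
    (x : ZMod n) : lexColor n S x = #{y ∈ Sᶜ | lexKey S y < lexKey S x} := by
  rw [lexColor, filter_congr fun y _ => (lexKey_lt_lexKey_iff hn y x).symm, filter_erase,
    erase_eq_of_notMem (by simp)]

theorem stmt9_general (k : ℕ) (S : Finset (ZMod (2 * k + 1))) (hS : S.card = k) :
    Set.BijOn (fun x => lexColor (2 * k + 1) S x) (↑Sᶜ) {c : ℕ | c ≤ k} := by
  have hcompl : #Sᶜ = k + 1 := by rw [card_compl, ZMod.card]; omega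
  have hrank := bijOn_card_filter_lt (s := Sᶜ) (lexKey_injective S).injOn
  rw [hcompl, Set.Iio_add_one_eq_Iic] at hrank
  simp only [lexColor_eq_card_filter_lexKey_lt (by omega : 2 * #S + 1 = 2 * k + 1)]
  exact hrank

/-- For a `k`-subset `S` of `Z_{2k+1}`, the lexical-color map `x ↦ c(x,S)` is a
bijection from `Z_{2k+1} \ S` onto `{0, 1, …, k}`. -/
theorem stmt9 (k : ℕ) (hk : 1 ≤ k) (S : Finset (ZMod (2 * k + 1))) (hS : S.card = k) :
    Set.BijOn (fun x => lexColor (2 * k + 1) S x) (↑Sᶜ) {c : ℕ | c ≤ k} :=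
  stmt9_general k S hS
end

section
/- Let k ≥ 1, n = 2k+1, and let T be a (k+1)-element subset of Z_n. Then the map x ↦ c(x, T \ {x}) is a bijection from T onto the color set {0, 1, …, k}. -/
/-!
Fix `x ∈ T` and walk backwards around `Z_n` from `x`, stepping `+1` at points outside `T` and
`-1` at points of `T`. The height reached at `z` is the weight `|[z,x) \ T| - |[z,x) ∩ T|` of
the arc `[z,x)`, and the full circuit ends at height `|Tᶜ| - |T| = -1`. The colour of `x` counts
the up-steps ending at a positive height; by a level-crossing count this equals the number of
down-steps ending at a nonnegative height, i.e. the number of `z ∈ T \ {x}` for which `[z,x)` has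
nonnegative weight. Since the weights of `[z,x)` and `[x,z)` add up to `-1`, "`[z,x)` has
nonnegative weight" is a strict total order on `Z_n`, so the colour of `x` is its rank in `T`.
-/

open Finset

-- Each up-step from height `h ≥ 0` to `h + 1` is undone by the next down-step from `h + 1` to `h`,
-- if there is one.
theorem card_upSteps_eq_card_downSteps_add (g : ℕ → ℤ)
    (hg : ∀ i, g (i + 1) = g i + 1 ∨ g (i + 1) = g i - 1) (m : ℕ) :
    (#{i ∈ range m | g (i + 1) = g i + 1 ∧ 0 < g (i + 1)} : ℤ) =
      #{i ∈ range m | g (i + 1) = g i - 1 ∧ 0 ≤ g (i + 1)} + max (g m) 0 - max (g 0) 0 := by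
  induction m with
  | zero => simp
  | succ m ih =>
    have hm : ∀ p : ℕ → Prop, [DecidablePred p] → m ∉ filter p (range m) := by simp
    rw [range_add_one, filter_insert, filter_insert]
    rcases hg m with h | h <;> split_ifs <;>
      (try simp only [card_insert_of_notMem (hm _), Nat.cast_add, Nat.cast_one]) <;> omega

theorem bijOn_card_filter_rel {α : Type*} (s : Finset α) (r : α → α → Prop) [DecidableRel r]
    (irrefl : ∀ a ∈ s, ¬ r a a) (trans : ∀ a ∈ s, ∀ b ∈ s, ∀ c ∈ s, r a b → r b c → r a c)
    (total : ∀ a ∈ s, ∀ b ∈ s, a ≠ b → r a b ∨ r b a) :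
    Set.BijOn (fun x => #{z ∈ s | r z x}) s (range #s) := by
  classical
  have maps : Set.MapsTo (fun x => #{z ∈ s | r z x}) s (range #s) := by
    intro x hx
    simpa using card_lt_card <| ssubset_iff_of_subset (filter_subset _ s) |>.2
      ⟨x, hx, by simp [irrefl x hx]⟩
  have lt_of_rel : ∀ a ∈ s, ∀ b ∈ s, r a b → #{z ∈ s | r z a} < #{z ∈ s | r z b} := by
    intro a ha b hb hab
    refine card_lt_card <| ssubset_iff.2 ⟨a, by simp [irrefl a ha], ?_⟩
    intro z hz
    simp only [mem_insert, mem_filter] at hz ⊢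
    rcases hz with rfl | ⟨hz, hza⟩
    · exact ⟨ha, hab⟩
    · exact ⟨hz, trans z hz a ha b hb hza hab⟩
  have inj : Set.InjOn (fun x => #{z ∈ s | r z x}) s := by
    intro a ha b hb hab
    by_contra hne
    rcases total a ha b hb hne with h | h
    · exact (lt_of_rel a ha b hb h).ne hab
    · exact (lt_of_rel b hb a ha h).ne hab.symm
  exact ⟨maps, inj, surjOn_of_injOn_of_card_le _ maps inj (by simp)⟩

section CyclicWalk

variable {n : ℕ}

theorem val_natCast_add_one {i : ℕ} (hi : i + 1 < n) : ((i : ZMod n) + 1).val = i + 1 := by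
  exact_mod_cast ZMod.val_cast_of_lt hi

theorem injOn_sub_natCast_add_one (x : ZMod n) :
    Set.InjOn (fun i : ℕ => x - (i + 1)) (range n) := by
  intro i hi j hj hij
  have := congrArg ZMod.val (add_right_cancel (sub_right_injective hij))
  rwa [ZMod.val_cast_of_lt (mem_range.1 hi), ZMod.val_cast_of_lt (mem_range.1 hj)] at this

theorem sub_natCast_add_one_of_eq (x : ZMod n) {i : ℕ} (hi : i + 1 = n) : x - (i + 1) = x := by
  rw [← Nat.cast_add_one, hi, ZMod.natCast_self, sub_zero]

variable (T : Finset (ZMod n))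

def walkStep (a : ZMod n) : ℤ := if a ∈ T then -1 else 1

def backWalk (x : ZMod n) (t : ℕ) : ℤ := ∑ i ∈ range t, walkStep T (x - (i + 1))

theorem backWalk_succ (x : ZMod n) (i : ℕ) :
    backWalk T x (i + 1) = backWalk T x i + walkStep T (x - (i + 1)) :=
  sum_range_succ _ _

theorem backWalk_succ_eq_or (x : ZMod n) (i : ℕ) :
    backWalk T x (i + 1) = backWalk T x i + 1 ∨ backWalk T x (i + 1) = backWalk T x i - 1 := by
  rw [backWalk_succ, walkStep]
  split_ifs
  exacts [Or.inr rfl, Or.inl rfl]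

theorem backWalk_add (x : ZMod n) (d t : ℕ) :
    backWalk T x (d + t) = backWalk T x d + backWalk T (x - d) t := by
  rw [backWalk, sum_range_add]
  congr 1
  refine sum_congr rfl fun i _ => ?_
  push_cast
  ring_nf

variable [NeZero n]

def arcWeight (z x : ZMod n) : ℤ := ∑ a ∈ cycInterval n z x, walkStep T a

theorem mem_cycInterval_iff {z x a : ZMod n} :
    a ∈ cycInterval n z x ↔ 0 < (x - a).val ∧ (x - a).val ≤ (x - z).val := by
  rw [cycInterval, mem_filter, show a - z = (x - z) - (x - a) by ring]
  simp only [mem_univ, true_and]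
  by_cases h : (x - a).val ≤ (x - z).val
  · rw [ZMod.val_sub h]
    omega
  · push Not at h
    have hsub : ((x - a) - (x - z)).val = (x - a).val - (x - z).val := ZMod.val_sub h.le
    have hne : (x - a) - (x - z) ≠ 0 := by
      intro h0; rw [h0, ZMod.val_zero] at hsub; omega
    rw [← neg_sub, ZMod.neg_val, if_neg hne, hsub]
    have := ZMod.val_lt (x - a)
    omega

theorem image_range_sub_natCast_add_one (x : ZMod n) :
    (range n).image (fun i : ℕ => x - (i + 1)) = univ :=
  eq_univ_of_card _ <| by
    rw [card_image_of_injOn (injOn_sub_natCast_add_one x), card_range, ZMod.card]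

theorem cycInterval_eq_image (z x : ZMod n) :
    cycInterval n z x = (range (x - z).val).image (fun i : ℕ => x - (i + 1)) := by
  ext a
  rw [mem_cycInterval_iff, mem_image]
  constructor
  · rintro ⟨hpos, hle⟩
    refine ⟨(x - a).val - 1, mem_range.2 (by omega), ?_⟩
    rw [Nat.cast_pred hpos, sub_add_cancel, ZMod.natCast_zmod_val, sub_sub_cancel]
  · rintro ⟨i, hi, rfl⟩
    rw [mem_range] at hi
    have := ZMod.val_lt (x - z)
    rw [sub_sub_cancel, val_natCast_add_one (by omega)]
    omega

theorem card_filter_eq_card_filter_range (x : ZMod n) (s : Finset (ZMod n)) (P : ZMod n → Prop)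
    [DecidablePred P] :
    #{y ∈ s | P y} = #{i ∈ range n | x - ((i : ℕ) + 1) ∈ s ∧ P (x - ((i : ℕ) + 1))} := by
  calc #{y ∈ s | P y}
      = #{y ∈ (range n).image (fun i : ℕ => x - (i + 1)) | y ∈ s ∧ P y} := by
        rw [image_range_sub_natCast_add_one]; congr 1; ext; simp
    _ = _ := by
        rw [filter_image,
          card_image_of_injOn ((injOn_sub_natCast_add_one x).mono (filter_subset _ _))]

theorem sum_walkStep (I : Finset (ZMod n)) :
    ∑ a ∈ I, walkStep T a = (#(I ∩ Tᶜ) : ℤ) - #(I ∩ T) := by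
  simp only [walkStep, sum_ite, sum_const, filter_mem_eq_inter, filter_notMem_eq_sdiff,
    sdiff_eq_inter_compl, nsmul_eq_mul, mul_neg, mul_one]
  ring

theorem lexColor_eq_card_filter_arcWeight (S : Finset (ZMod n)) (x : ZMod n) :
    lexColor n S x = #{y ∈ Sᶜ.erase x | 0 < arcWeight S y x} := by
  unfold lexColor arcWeight
  congr 1
  refine filter_congr fun y _ => ?_
  rw [sum_walkStep]
  omega

theorem arcWeight_erase_self (z x : ZMod n) : arcWeight (T.erase x) z x = arcWeight T z x := by
  refine sum_congr rfl fun a ha => ?_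
  have hax : a ≠ x := by
    rintro rfl
    simp [mem_cycInterval_iff] at ha
  simp [walkStep, hax]

theorem lexColor_erase_eq_card_filter_arcWeight_pos {x : ZMod n} (hx : x ∈ T) :
    lexColor n (T.erase x) x = #{y ∈ Tᶜ | 0 < arcWeight T y x} := by
  rw [lexColor_eq_card_filter_arcWeight, compl_erase, erase_insert (by simpa using hx)]
  simp only [arcWeight_erase_self]

theorem arcWeight_eq_backWalk (z x : ZMod n) : arcWeight T z x = backWalk T x (x - z).val := by
  rw [arcWeight, cycInterval_eq_image, sum_image ((injOn_sub_natCast_add_one x).mono ?_), backWalk]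
  simpa using (ZMod.val_lt (x - z)).le

theorem backWalk_card (x : ZMod n) : backWalk T x n = (#Tᶜ : ℤ) - #T := by
  rw [backWalk, ← sum_image (injOn_sub_natCast_add_one x), image_range_sub_natCast_add_one,
    sum_walkStep, univ_inter, univ_inter]

theorem arcWeight_add {z y x : ZMod n} (h : (x - y).val ≤ (x - z).val) :
    arcWeight T z x = arcWeight T z y + arcWeight T y x := by
  have hyz : (y - z).val = (x - z).val - (x - y).val := by
    rw [← ZMod.val_sub h]; ring_nf
  rw [arcWeight_eq_backWalk, arcWeight_eq_backWalk T z y, arcWeight_eq_backWalk T y x, hyz,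
    ← Nat.add_sub_cancel' h, backWalk_add, ZMod.natCast_zmod_val, sub_sub_cancel,
    Nat.add_sub_cancel_left, add_comm]

theorem arcWeight_add_arcWeight_swap {z x : ZMod n} (h : z ≠ x) :
    arcWeight T z x + arcWeight T x z = (#Tᶜ : ℤ) - #T := by
  have hzx : (z - x).val = n - (x - z).val := by
    rw [← neg_sub, ZMod.neg_val, if_neg (sub_ne_zero.2 h.symm)]
  have hsplit := backWalk_add T x (x - z).val (n - (x - z).val)
  rw [Nat.add_sub_cancel' (ZMod.val_lt _).le, backWalk_card, ZMod.natCast_zmod_val,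
    sub_sub_cancel] at hsplit
  rw [arcWeight_eq_backWalk, arcWeight_eq_backWalk T x z, hzx, hsplit]

theorem arcWeight_sub_natCast_add_one (x : ZMod n) {i : ℕ} (hi : i + 1 < n) :
    arcWeight T (x - (i + 1)) x = backWalk T x (i + 1) := by
  rw [arcWeight_eq_backWalk, sub_sub_cancel, val_natCast_add_one hi]

theorem lexColor_erase_eq_card_upSteps {x : ZMod n} (hx : x ∈ T) :
    lexColor n (T.erase x) x =
      #{i ∈ range n | backWalk T x (i + 1) = backWalk T x i + 1 ∧ 0 < backWalk T x (i + 1)} := by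
  rw [lexColor_erase_eq_card_filter_arcWeight_pos T hx, card_filter_eq_card_filter_range x]
  refine congrArg card (filter_congr fun i hi => ?_)
  rcases (show i + 1 ≤ n from mem_range.1 hi).lt_or_eq with hlt | heq
  · rw [arcWeight_sub_natCast_add_one T x hlt, backWalk_succ, mem_compl]
    by_cases hmem : x - (i + 1) ∈ T <;> simp [walkStep, hmem]
  · rw [sub_natCast_add_one_of_eq x heq, backWalk_succ, sub_natCast_add_one_of_eq x heq]
    simp [walkStep, hx]

theorem card_filter_arcWeight_nonneg_eq_card_downSteps (hT : #T = #Tᶜ + 1) (x : ZMod n) :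
    #{z ∈ T | z ≠ x ∧ 0 ≤ arcWeight T z x} =
      #{i ∈ range n | backWalk T x (i + 1) = backWalk T x i - 1 ∧ 0 ≤ backWalk T x (i + 1)} := by
  rw [card_filter_eq_card_filter_range x]
  refine congrArg card (filter_congr fun i hi => ?_)
  rcases (show i + 1 ≤ n from mem_range.1 hi).lt_or_eq with hlt | heq
  · have hne : x - (i + 1) ≠ x := by
      intro h
      have := val_natCast_add_one (n := n) hlt
      rw [sub_eq_self.1 h, ZMod.val_zero] at this
      omega
    rw [arcWeight_sub_natCast_add_one T x hlt, backWalk_succ]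
    by_cases hmem : x - (i + 1) ∈ T <;> simp [walkStep, hmem, hne] <;> omega
  · have hlast : backWalk T x (i + 1) = -1 := by
      rw [heq, backWalk_card, hT]; push_cast; ring
    rw [sub_natCast_add_one_of_eq x heq, hlast]
    simp

theorem lexColor_erase_eq_card_filter_arcWeight_nonneg (hT : #T = #Tᶜ + 1) {x : ZMod n}
    (hx : x ∈ T) :
    lexColor n (T.erase x) x = #{z ∈ T | z ≠ x ∧ 0 ≤ arcWeight T z x} := by
  have hcross := card_upSteps_eq_card_downSteps_add _ (backWalk_succ_eq_or T x) n
  rw [backWalk_card, hT, show backWalk T x 0 = 0 from sum_range_zero _] at hcross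
  rw [lexColor_erase_eq_card_upSteps T hx, card_filter_arcWeight_nonneg_eq_card_downSteps T hT]
  push_cast at hcross
  omega

theorem arcWeight_nonneg_or (hT : #T = #Tᶜ + 1) {z x : ZMod n} (h : z ≠ x) :
    0 ≤ arcWeight T z x ∨ 0 ≤ arcWeight T x z := by
  have := arcWeight_add_arcWeight_swap T h
  rw [hT] at this
  push_cast at this
  omega

theorem arcWeight_nonneg_trans (hT : #T = #Tᶜ + 1) {z y x : ZMod n} (hzy : z ≠ y)
    (h₁ : 0 ≤ arcWeight T z y) (h₂ : 0 ≤ arcWeight T y x) :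
    z ≠ x ∧ 0 ≤ arcWeight T z x := by
  have hswap : ∀ {a b : ZMod n}, a ≠ b → arcWeight T a b + arcWeight T b a = -1 := fun h => by
    rw [arcWeight_add_arcWeight_swap T h, hT]; push_cast; ring
  refine ⟨by rintro rfl; linarith [hswap hzy], ?_⟩
  rcases le_total (x - y).val (x - z).val with h | h
  · linarith [arcWeight_add T h]
  · linarith [arcWeight_add T h, hswap hzy]

end CyclicWalk

theorem stmt10_general (k : ℕ) (T : Finset (ZMod (2 * k + 1)))
    (hT : T.card = k + 1) :
    Set.BijOn (fun x => lexColor (2 * k + 1) (T.erase x) x) (↑T) {c : ℕ | c ≤ k} := by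
  have hcard : #T = #Tᶜ + 1 := by
    rw [card_compl, ZMod.card, hT]
    omega
  have hrank := bijOn_card_filter_rel T (fun z x => z ≠ x ∧ 0 ≤ arcWeight T z x)
    (fun _ _ h => h.1 rfl)
    (fun _ _ _ _ _ _ hab hbc => arcWeight_nonneg_trans T hcard hab.1 hab.2 hbc.2)
    (fun _ _ _ _ hab => (arcWeight_nonneg_or T hcard hab).imp (⟨hab, ·⟩) (⟨hab.symm, ·⟩))
  have htarget : (range #T : Set ℕ) = {c | c ≤ k} := by
    ext c
    simp [hT]
  rw [← htarget]
  exact hrank.congr fun x hx => (lexColor_erase_eq_card_filter_arcWeight_nonneg T hcard hx).symm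

/-- For a `(k+1)`-subset `T` of `Z_{2k+1}`, the map `x ↦ c(x, T \ {x})` is a bijection
from `T` onto `{0, 1, …, k}`. -/
theorem stmt10 (k : ℕ) (hk : 1 ≤ k) (T : Finset (ZMod (2 * k + 1)))
    (hT : T.card = k + 1) :
    Set.BijOn (fun x => lexColor (2 * k + 1) (T.erase x) x) (↑T) {c : ℕ | c ≤ k} :=
  stmt10_general k T hT
end

section
/- Let k ≥ 1 and n = 2k+1. Assign to each edge of the middle-levels graph M_k, written as {S, S ∪ {x}} with S a k-element subset of Z_n and x ∉ S, the lexical color c(x, S). Then for every color c ∈ {0, 1, …, k}, the set of edges of color c is a perfect matching of M_k; hence the k+1 color classes partition the edge set of M_k into k+1 perfect matchings (a 1-factorization of M_k). -/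
/-- The lexical color of the edge `{S, S ∪ {x}}`, expressed symmetrically: for an
edge `A ⊂ B` of `M_k`, the difference `B \ A` is a singleton `{x}` (so its sum is
`x`) and the color is `c(x, A)`. -/
def edgeColor (n : ℕ) [NeZero n] (A B : Finset (ZMod n)) : ℕ :=
  if A ⊆ B then lexColor n A ((B \ A).sum id) else lexColor n B ((A \ B).sum id)

/-!
For a `k`-set `S`, let `G p` be the excess of non-members over members of `S` among
`0, …, p - 1`. Because `n - 2k = 1`, the interval `[y, x)` has more non-members than members
exactly when `(G y, -y) < (G x, -x)` lexicographically. Hence `c(x, S)` is the rank of `x` among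
the `k + 1` non-members of `S` for this order, and takes each value `0, …, k` exactly once.

For a `(k+1)`-set `B ∋ x`, put `T = Bᶜ`. The excess of non-members over members of `T` in
`[x - i, x)`, for `i = 0, …, n - 1`, is a closed `±1` walk. Its up-steps from level `≥ 0` and its
down-steps from level `> 0` are equally many, and this gives `c(x, B \ {x}) + c(x, T) = k`: the
colors at `B` are those at the `k`-set `T` reversed, and the first case applies.
-/

open Finset

lemma Finset.injOn_card_filter_lt {α β : Type*} [LinearOrder β] {s : Finset α} {f : α → β}
    (hf : Set.InjOn f s) : Set.InjOn (fun x => #{y ∈ s | f y < f x}) s := by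
  have hmono : ∀ x ∈ s, ∀ x' ∈ s, f x < f x' →
      #{y ∈ s | f y < f x} < #{y ∈ s | f y < f x'} :=
    fun x hx x' _ hlt => card_lt_card <| (ssubset_iff_of_subset
      fun y hy => mem_filter.2 ⟨(mem_filter.1 hy).1, (mem_filter.1 hy).2.trans hlt⟩).2
      ⟨x, mem_filter.2 ⟨hx, hlt⟩, fun h => lt_irrefl _ (mem_filter.1 h).2⟩
  intro x hx x' hx' h
  by_contra hne
  rcases (hf.ne hx hx' hne).lt_or_gt with hlt | hlt
  · exact (hmono x hx x' hx' hlt).ne h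
  · exact (hmono x' hx' x hx hlt).ne' h

lemma Finset.existsUnique_of_injOn_of_lt_card {α : Type*} {s : Finset α} {f : α → ℕ}
    (hf : Set.InjOn f s) (hlt : ∀ x ∈ s, f x < #s) {c : ℕ} (hc : c < #s) :
    ∃! x, x ∈ s ∧ f x = c := by
  obtain ⟨x, hx, hfx⟩ := surjOn_of_injOn_of_card_le f (t := range #s)
    (fun x hx => by simpa using hlt x hx) hf (by simp) (by simpa using hc)
  exact ⟨x, ⟨hx, hfx⟩, fun y ⟨hy, hfy⟩ => hf hy hx (hfy.trans hfx.symm)⟩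

lemma Finset.card_filter_up_eq_card_filter_down (p : ℕ → Prop) [DecidablePred p]
    (f : ℕ → ℤ) {m : ℕ} (hstep : ∀ i < m, f (i + 1) = if p i then f i + 1 else f i - 1)
    (hclosed : f m = f 0) (L : ℤ) :
    #{i ∈ range m | p i ∧ L ≤ f i} = #{i ∈ range m | ¬ p i ∧ L < f i} := by
  -- `(v - L)⁺` rises exactly at the up-steps from level `≥ L`, falls exactly at the down-steps
  -- from level `> L`, and returns to its initial value.
  let F : ℤ → ℤ := fun v => (v - L).toNat
  have hterm : ∀ i ∈ range m, F (f (i + 1)) - F (f i) =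
      (if p i ∧ L ≤ f i then 1 else 0) - (if ¬ p i ∧ L < f i then 1 else 0) := by
    intro i hi
    rw [hstep i (mem_range.1 hi)]
    by_cases hp : p i <;> by_cases hL : L ≤ f i <;> simp [F, hp, hL] <;> omega
  have htel := sum_range_sub (fun i => F (f i)) m
  rw [hclosed, sub_self, sum_congr rfl hterm, sum_sub_distrib, sum_boole, sum_boole] at htel
  exact_mod_cast sub_eq_zero.1 htel

namespace MiddleLevels

variable {n : ℕ}

def countFrom (S : Finset (ZMod n)) (y : ZMod n) (m : ℕ) : ℕ :=
  #((range m).filter fun i : ℕ => y + (i : ZMod n) ∈ S)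

lemma countFrom_add (S : Finset (ZMod n)) (y : ZMod n) (a b : ℕ) :
    countFrom S y (a + b) = countFrom S y a + countFrom S (y + a) b := by
  rw [countFrom, range_add_eq_union, filter_union, card_union_of_disjoint, filter_map,
    card_map]
  · simp [countFrom, add_assoc]
  · exact disjoint_filter_filter (disjoint_range_addLeftEmbedding a (range b))

lemma countFrom_one (S : Finset (ZMod n)) (y : ZMod n) :
    countFrom S y 1 = if y ∈ S then 1 else 0 := by
  unfold countFrom; split_ifs <;> simp [range_one, filter_singleton, *]

variable [NeZero n]

def excess (S : Finset (ZMod n)) (y : ZMod n) (m : ℕ) : ℤ :=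
  countFrom Sᶜ y m - countFrom S y m

lemma countFrom_eq_card_filter (S : Finset (ZMod n)) (y : ZMod n) {m : ℕ} (hm : m ≤ n) :
    countFrom S y m = #{z ∈ S | (z - y).val < m} := by
  refine card_nbij' (fun i => y + i) (fun z => (z - y).val) ?_ ?_ ?_ ?_
  · intro i hi
    simp only [coe_filter, mem_range, Set.mem_ofPred_eq] at hi ⊢
    rw [add_sub_cancel_left, ZMod.val_cast_of_lt (hi.1.trans_le hm)]
    exact ⟨hi.2, hi.1⟩
  · intro z hz
    simp only [coe_filter, mem_range, Set.mem_ofPred_eq] at hz ⊢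
    rw [ZMod.natCast_zmod_val, add_sub_cancel]
    exact ⟨hz.2, hz.1⟩
  · intro i hi
    simp only [coe_filter, mem_range, Set.mem_ofPred_eq] at hi
    simp only [add_sub_cancel_left, ZMod.val_cast_of_lt (hi.1.trans_le hm)]
  · intro z _
    simp only [ZMod.natCast_zmod_val, add_sub_cancel]

lemma countFrom_card (S : Finset (ZMod n)) (y : ZMod n) : countFrom S y n = #S := by
  rw [countFrom_eq_card_filter S y le_rfl, filter_true_of_mem fun z _ => ZMod.val_lt _]

lemma card_cycInterval_inter (S : Finset (ZMod n)) (y x : ZMod n) :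
    #(cycInterval n y x ∩ S) = countFrom S y (x - y).val := by
  rw [countFrom_eq_card_filter S y (ZMod.val_lt _).le, inter_comm, cycInterval,
    inter_filter, inter_univ]

lemma excess_add (S : Finset (ZMod n)) (y : ZMod n) (a b : ℕ) :
    excess S y (a + b) = excess S y a + excess S (y + a) b := by
  simp only [excess, countFrom_add]; push_cast; ring

lemma excess_card (S : Finset (ZMod n)) (y : ZMod n) : excess S y n = #Sᶜ - #S := by
  simp only [excess, countFrom_card]

lemma excess_zero (S : Finset (ZMod n)) (y : ZMod n) : excess S y 0 = 0 := by
  simp [excess, countFrom]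

lemma excess_one (S : Finset (ZMod n)) (y : ZMod n) :
    excess S y 1 = if y ∈ S then -1 else 1 := by
  by_cases hy : y ∈ S <;> simp [excess, countFrom_one, hy]

lemma val_sub_add_val (x y : ZMod n) :
    (x - y).val + y.val = x.val ∨ (x - y).val + y.val = x.val + n := by
  rcases lt_or_ge ((x - y).val + y.val) n with h | h
  · left; rw [← ZMod.val_add_of_lt h, sub_add_cancel]
  · right; rw [ZMod.val_add_val_of_le h, sub_add_cancel]

lemma excess_sub_val {S : Finset (ZMod n)} (hS : 2 * #S + 1 = n) (x y : ZMod n) :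
    excess S y (x - y).val =
      excess S 0 x.val - excess S 0 y.val + if x.val < y.val then 1 else 0 := by
  have hsplit :
      excess S 0 (y.val + (x - y).val) = excess S 0 y.val + excess S y (x - y).val := by
    rw [excess_add, zero_add, ZMod.natCast_zmod_val]
  have hwrap : excess S 0 (x.val + n) = excess S 0 x.val + 1 := by
    rw [excess_add, excess_card, card_compl, ZMod.card]
    omega
  have := ZMod.val_lt (x - y)
  rcases val_sub_add_val x y with h | h <;> rw [add_comm, h] at hsplit
  · rw [if_neg (by omega)]; omega
  · rw [if_pos (by omega)]; omega

def lexKey (S : Finset (ZMod n)) (z : ZMod n) : ℤ ×ₗ ℤ :=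
  toLex (excess S 0 z.val, -(z.val : ℤ))

lemma lexKey_injective (S : Finset (ZMod n)) : Function.Injective (lexKey S) := by
  intro a b h
  have := congrArg (fun p => (ofLex p).2) h
  simp only [lexKey, ofLex_toLex, neg_inj, Nat.cast_inj] at this
  exact ZMod.val_injective n this

lemma zero_lt_excess_iff {S : Finset (ZMod n)} (hS : 2 * #S + 1 = n) (x y : ZMod n) :
    0 < excess S y (x - y).val ↔ lexKey S y < lexKey S x := by
  rw [excess_sub_val hS, lexKey, lexKey, Prod.Lex.toLex_lt_toLex]
  split_ifs <;> omega

lemma lexColor_eq_card_filter_excess (S : Finset (ZMod n)) (x : ZMod n) :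
    lexColor n S x = #{y ∈ Sᶜ.erase x | 0 < excess S y (x - y).val} := by
  unfold lexColor excess
  congr 1
  refine filter_congr fun y _ => ?_
  rw [card_cycInterval_inter, card_cycInterval_inter]
  omega

lemma lexColor_eq_card_filter_lexKey {S : Finset (ZMod n)} (hS : 2 * #S + 1 = n)
    (x : ZMod n) :
    lexColor n S x = #{y ∈ Sᶜ | lexKey S y < lexKey S x} := by
  simp_rw [lexColor_eq_card_filter_excess, zero_lt_excess_iff hS, filter_erase]
  rw [erase_eq_of_notMem (by simp)]

lemma lexColor_injOn {S : Finset (ZMod n)} (hS : 2 * #S + 1 = n) :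
    Set.InjOn (lexColor n S) (Sᶜ : Finset (ZMod n)) := by
  have hcolor : lexColor n S = fun x => #{y ∈ Sᶜ | lexKey S y < lexKey S x} :=
    funext (lexColor_eq_card_filter_lexKey hS)
  rw [hcolor]
  exact injOn_card_filter_lt (lexKey_injective S).injOn

lemma lexColor_lt_card_compl {S : Finset (ZMod n)} {x : ZMod n} (hx : x ∉ S) :
    lexColor n S x < #Sᶜ :=
  (card_filter_le _ _).trans_lt (card_erase_lt_of_mem (mem_compl.2 hx))

lemma existsUnique_lexColor_eq {S : Finset (ZMod n)} (hS : 2 * #S + 1 = n) {c : ℕ}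
    (hc : c < #Sᶜ) : ∃! x, x ∈ Sᶜ ∧ lexColor n S x = c :=
  existsUnique_of_injOn_of_lt_card (lexColor_injOn hS)
    (fun _ hx => lexColor_lt_card_compl (mem_compl.1 hx)) hc

lemma excess_sub_succ (S : Finset (ZMod n)) (x : ZMod n) (i : ℕ) :
    excess S (x - ((i + 1 : ℕ) : ZMod n)) (i + 1) =
      if x - ((i + 1 : ℕ) : ZMod n) ∈ S then excess S (x - i) i - 1
      else excess S (x - i) i + 1 := by
  have hshift : x - ((i + 1 : ℕ) : ZMod n) + ((1 : ℕ) : ZMod n) = x - i := by push_cast; ring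
  rw [add_comm i 1, excess_add, excess_one, add_comm 1 i, hshift]
  split_ifs <;> ring

lemma card_filter_erase_eq_card_filter_range (U : Finset (ZMod n)) (x : ZMod n)
    (P : ZMod n → Prop) [DecidablePred P] :
    #{y ∈ U.erase x | P y} =
      #{i ∈ range (n - 1) |
        x - ((i + 1 : ℕ) : ZMod n) ∈ U ∧ P (x - ((i + 1 : ℕ) : ZMod n))} := by
  have hinv : ∀ i < n - 1, (x - (x - ((i + 1 : ℕ) : ZMod n))).val = i + 1 := fun i hi => by
    rw [sub_sub_cancel, ZMod.val_cast_of_lt (by omega)]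
  have hpos : ∀ y ≠ x, 0 < (x - y).val := fun y hy => by
    rw [Nat.pos_iff_ne_zero, ne_eq, ZMod.val_eq_zero, sub_eq_zero]; exact hy.symm
  have hback : ∀ y ≠ x, x - (((x - y).val - 1 + 1 : ℕ) : ZMod n) = y := fun y hy => by
    rw [Nat.sub_add_cancel (hpos y hy), ZMod.natCast_zmod_val, sub_sub_cancel]
  refine card_nbij' (fun y => (x - y).val - 1) (fun i => x - ((i + 1 : ℕ) : ZMod n))
    ?_ ?_ ?_ ?_
  · intro y hy
    simp only [coe_filter, mem_erase, Set.mem_ofPred_eq, mem_range] at hy ⊢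
    rw [hback y hy.1.1]
    exact ⟨by have := ZMod.val_lt (x - y); have := hpos y hy.1.1; omega, hy.1.2, hy.2⟩
  · intro i hi
    simp only [coe_filter, mem_erase, Set.mem_ofPred_eq, mem_range] at hi ⊢
    refine ⟨⟨fun h => ?_, hi.2.1⟩, hi.2.2⟩
    have := hinv i hi.1
    rw [h, sub_self, ZMod.val_zero] at this
    omega
  · intro y hy
    exact hback y (mem_erase.1 (mem_filter.1 hy).1).1
  · intro i hi
    simp only [hinv i (mem_range.1 (mem_filter.1 hi).1), Nat.add_sub_cancel]

lemma card_filter_eq_card_filter_range {U : Finset (ZMod n)} {x : ZMod n} (hx : x ∉ U)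
    (P : ZMod n → Prop) [DecidablePred P] :
    #{y ∈ U | P y} =
      #{i ∈ range (n - 1) |
        x - ((i + 1 : ℕ) : ZMod n) ∈ U ∧ P (x - ((i + 1 : ℕ) : ZMod n))} := by
  rw [← card_filter_erase_eq_card_filter_range, erase_eq_of_notMem hx]

lemma lexColor_compl_erase {T : Finset (ZMod n)} {x : ZMod n} (hx : x ∉ T) :
    lexColor n (Tᶜ.erase x) x = #{y ∈ T | excess T y (x - y).val < 0} := by
  unfold lexColor
  rw [compl_erase, compl_compl, erase_insert hx]
  congr 1
  refine filter_congr fun y _ => ?_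
  have hxI : x ∉ cycInterval n y x := by simp [cycInterval]
  rw [inter_erase, erase_eq_of_notMem (fun h => hxI (mem_inter.1 h).1),
    inter_insert_of_notMem hxI, card_cycInterval_inter, card_cycInterval_inter, excess]
  omega

lemma lexColor_add_lexColor_compl_erase {T : Finset (ZMod n)} (hT : 2 * #T + 1 = n)
    {x : ZMod n} (hx : x ∉ T) : lexColor n T x + lexColor n (Tᶜ.erase x) x = #T := by
  let f : ℕ → ℤ := fun i => excess T (x - i) i
  have hstep : ∀ i, f (i + 1) =
      if x - ((i + 1 : ℕ) : ZMod n) ∉ T then f i + 1 else f i - 1 := fun i => by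
    simp only [f, excess_sub_succ, ite_not]
  have hclosed : f (n - 1) = f 0 := by
    -- the last step adds `x ∉ T` and ends at `f n = #Tᶜ - #T = 1`
    have hn := hstep (n - 1)
    rw [Nat.sub_add_cancel NeZero.one_le, ZMod.natCast_self, sub_zero, if_pos hx] at hn
    simp only [f, excess_card, excess_zero, card_compl, ZMod.card] at hn ⊢
    omega
  have hlen : ∀ i ∈ range (n - 1), (x - (x - ((i + 1 : ℕ) : ZMod n))).val = i + 1 :=
    fun i hi => by rw [sub_sub_cancel, ZMod.val_cast_of_lt (by simp at hi; omega)]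
  have h1 : lexColor n T x =
      #{i ∈ range (n - 1) | x - ((i + 1 : ℕ) : ZMod n) ∉ T ∧ 0 ≤ f i} := by
    rw [lexColor_eq_card_filter_excess, card_filter_erase_eq_card_filter_range]
    refine congrArg card (filter_congr fun i hi => ?_)
    rw [hlen i hi, mem_compl]
    refine and_congr_right fun hy => ?_
    rw [show excess T _ (i + 1) = f (i + 1) from rfl, hstep i, if_pos hy]
    omega
  have h2 : lexColor n (Tᶜ.erase x) x =
      #{i ∈ range (n - 1) | ¬ x - ((i + 1 : ℕ) : ZMod n) ∉ T ∧ f i ≤ 0} := by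
    rw [lexColor_compl_erase hx, card_filter_eq_card_filter_range hx]
    refine congrArg card (filter_congr fun i hi => ?_)
    rw [hlen i hi, not_not]
    refine and_congr_right fun hy => ?_
    rw [show excess T _ (i + 1) = f (i + 1) from rfl, hstep i, if_neg (not_not.2 hy)]
    omega
  have h3 : #T = #{i ∈ range (n - 1) | ¬ x - ((i + 1 : ℕ) : ZMod n) ∉ T} := by
    simpa using card_filter_eq_card_filter_range hx (fun _ => True)
  rw [h1, h2, h3, card_filter_up_eq_card_filter_down _ f (fun i _ => hstep i) hclosed 0]
  simpa only [filter_filter, not_lt] using card_filter_add_card_filter_not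
    (s := {i ∈ range (n - 1) | ¬ x - ((i + 1 : ℕ) : ZMod n) ∉ T}) (fun i => 0 < f i)

lemma existsUnique_lexColor_erase_eq {B : Finset (ZMod n)} (hB : 2 * #B = n + 1) {c : ℕ}
    (hc : c < #B) : ∃! x, x ∈ B ∧ lexColor n (B.erase x) x = c := by
  have hT : 2 * #Bᶜ + 1 = n := by
    have := NeZero.pos n
    rw [card_compl, ZMod.card]
    omega
  refine (existsUnique_congr fun x => ?_).1
    (existsUnique_lexColor_eq hT (c := #Bᶜ - c) (by rw [compl_compl]; omega))
  rw [compl_compl]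
  refine and_congr_right fun hx => ?_
  have hsum := lexColor_add_lexColor_compl_erase hT (x := x) (by simpa using hx)
  rw [compl_compl] at hsum
  omega

variable {k : ℕ}

lemma adj_iff_of_card_eq {v w : Vert k} (hv : #v.1 = k) :
    (middleLevels k).Adj v w ↔ ∃ x ∉ v.1, w.1 = insert x v.1 := by
  constructor
  · rintro (h | h)
    · obtain ⟨x, hx, hsub⟩ := ssubset_iff.1 h
      refine ⟨x, hx, (eq_of_subset_of_card_le hsub ?_).symm⟩
      rw [card_insert_of_notMem hx]
      rcases w.2 with hw | hw <;> omega
    · have := card_lt_card h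
      rcases w.2 with hw | hw <;> omega
  · rintro ⟨x, hx, hw⟩
    exact Or.inl (hw ▸ ssubset_insert hx)

lemma adj_iff_of_card_eq_succ {v w : Vert k} (hv : #v.1 = k + 1) :
    (middleLevels k).Adj v w ↔ ∃ x ∈ v.1, w.1 = v.1.erase x := by
  constructor
  · rintro (h | h)
    · have := card_lt_card h
      rcases w.2 with hw | hw <;> omega
    · obtain ⟨x, hx, hsub⟩ := ssubset_iff_exists_subset_erase.1 h
      refine ⟨x, hx, eq_of_subset_of_card_le hsub ?_⟩
      rw [card_erase_of_mem hx]
      rcases w.2 with hw | hw <;> omega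
  · rintro ⟨x, hx, hw⟩
    exact Or.inr (hw ▸ erase_ssubset hx)

lemma edgeColor_insert {A : Finset (ZMod n)} {x : ZMod n} (hx : x ∉ A) :
    edgeColor n A (insert x A) = lexColor n A x := by
  rw [edgeColor, if_pos (subset_insert x A), insert_sdiff_cancel hx, sum_singleton, id]

lemma edgeColor_erase {B : Finset (ZMod n)} {x : ZMod n} (hx : x ∈ B) :
    edgeColor n B (B.erase x) = lexColor n (B.erase x) x := by
  rw [edgeColor, if_neg (fun h => notMem_erase x B (h hx)), sdiff_erase_self hx, sum_singleton,
    id]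

lemma lexColor_le_of_card_eq {S : Finset (ZMod (2 * k + 1))} (hS : #S = k)
    {x : ZMod (2 * k + 1)} (hx : x ∉ S) : lexColor (2 * k + 1) S x ≤ k := by
  have := lexColor_lt_card_compl hx
  rw [card_compl, ZMod.card, hS] at this
  omega

lemma edgeColor_le {v w : Vert k} (h : (middleLevels k).Adj v w) :
    edgeColor (2 * k + 1) v.1 w.1 ≤ k := by
  rcases v.2 with hv | hv
  · obtain ⟨x, hx, hw⟩ := (adj_iff_of_card_eq hv).1 h
    rw [hw, edgeColor_insert hx]
    exact lexColor_le_of_card_eq hv hx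
  · obtain ⟨x, hx, hw⟩ := (adj_iff_of_card_eq_succ hv).1 h
    rw [hw, edgeColor_erase hx]
    exact lexColor_le_of_card_eq (by rw [card_erase_of_mem hx, hv]; rfl) (notMem_erase x v.1)

lemma existsUnique_adj_of_card_eq {v : Vert k} (hv : #v.1 = k) {c : ℕ} (hc : c ≤ k) :
    ∃! w : Vert k, (middleLevels k).Adj v w ∧ edgeColor (2 * k + 1) v.1 w.1 = c := by
  obtain ⟨x, ⟨hx, hxc⟩, hxu⟩ := existsUnique_lexColor_eq (S := v.1) (by omega) (c := c)
    (by rw [card_compl, ZMod.card]; omega)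
  have hx' : x ∉ v.1 := mem_compl.1 hx
  refine ⟨⟨insert x v.1, Or.inr (by rw [card_insert_of_notMem hx', hv])⟩,
    ⟨(adj_iff_of_card_eq hv).2 ⟨x, hx', rfl⟩, (edgeColor_insert hx').trans hxc⟩, ?_⟩
  rintro w ⟨hvw, hwc⟩
  obtain ⟨y, hy, hw⟩ := (adj_iff_of_card_eq hv).1 hvw
  rw [hw, edgeColor_insert hy] at hwc
  exact Subtype.ext (hw.trans (by rw [hxu y ⟨mem_compl.2 hy, hwc⟩]))

lemma existsUnique_adj_of_card_eq_succ {v : Vert k} (hv : #v.1 = k + 1) {c : ℕ}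
    (hc : c ≤ k) :
    ∃! w : Vert k, (middleLevels k).Adj v w ∧ edgeColor (2 * k + 1) v.1 w.1 = c := by
  obtain ⟨x, ⟨hx, hxc⟩, hxu⟩ := existsUnique_lexColor_erase_eq (B := v.1) (by omega) (c := c)
    (by omega)
  refine ⟨⟨v.1.erase x, Or.inl (by rw [card_erase_of_mem hx, hv]; rfl)⟩,
    ⟨(adj_iff_of_card_eq_succ hv).2 ⟨x, hx, rfl⟩, (edgeColor_erase hx).trans hxc⟩, ?_⟩
  rintro w ⟨hvw, hwc⟩
  obtain ⟨y, hy, hw⟩ := (adj_iff_of_card_eq_succ hv).1 hvw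
  rw [hw, edgeColor_erase hy] at hwc
  exact Subtype.ext (hw.trans (by rw [hxu y ⟨hy, hwc⟩]))

end MiddleLevels

open MiddleLevels

theorem stmt11_general (k : ℕ) :
    (∀ v w : Vert k, (middleLevels k).Adj v w → edgeColor (2 * k + 1) v.1 w.1 ≤ k) ∧
    (∀ c : ℕ, c ≤ k → ∀ v : Vert k,
      ∃! w : Vert k, (middleLevels k).Adj v w ∧ edgeColor (2 * k + 1) v.1 w.1 = c) := by
  refine ⟨fun v w => edgeColor_le, fun c hc v => ?_⟩
  rcases v.2 with hv | hv
  · exact existsUnique_adj_of_card_eq hv hc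
  · exact existsUnique_adj_of_card_eq_succ hv hc

/-- Lexical colors give a 1-factorization of `M_k`: every edge has a color in
`{0, …, k}`, and for every color `c ≤ k` the edges of color `c` form a perfect
matching (each vertex lies on exactly one edge of color `c`). -/
theorem stmt11 (k : ℕ) (hk : 1 ≤ k) :
    (∀ v w : Vert k, (middleLevels k).Adj v w → edgeColor (2 * k + 1) v.1 w.1 ≤ k) ∧
    (∀ c : ℕ, c ≤ k → ∀ v : Vert k,
      ∃! w : Vert k, (middleLevels k).Adj v w ∧ edgeColor (2 * k + 1) v.1 w.1 = c) :=
  stmt11_general k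
end

section
/- Let k ≥ 1, n = 2k+1, S a k-element subset of Z_n, and x ∈ Z_n \ S. Then the lexical color is invariant under complemented reversal: c(x, S) = c(n−1−x, ℵ(S ∪ {x})), where ℵ(S ∪ {x}) = { n−1−j mod n : j ∈ Z_n \ (S ∪ {x}) } is a k-element subset of Z_n not containing n−1−x. (That is, the edge {S, S ∪ {x}} of the middle-levels graph and its image edge {ℵ(S ∪ {x}), ℵ(S)} under ℵ receive the same lexical color.) -/
/-!
Let `h y` be the excess of non-members over members of `S` in the cyclic interval `[y, x)`, so
that `c(x, S)` counts the non-members `y ≠ x` with `h y > 0`. The reflection `j ↦ -1 - j` maps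
`(x, s]` onto `[-1 - s, -1 - x)`; together with complementation it turns the colour condition for
`ℵ(S ∪ {x})` at `-1 - s` (`s ∈ S`) into `h (s + 1) > 0`. Going once around the cycle, `h` drops by
one at each non-member and rises by one at each member of `S`, and it vanishes at `x` and `x + 1`
because `S` misses exactly `k + 1` of the `2k + 1` points. Since `max h 0` telescopes around the
cycle, the descents from a positive height and the ascents to a positive height are equinumerous.
-/

open Finset

namespace ZMod

variable {n : ℕ} [NeZero n]

lemma val_sub_eq_ite_s13 (a b : ZMod n) :
    (a - b).val = if b.val ≤ a.val then a.val - b.val else a.val + n - b.val := by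
  split_ifs with h
  · exact val_sub h
  · have : NeZero b := ⟨by rintro rfl; simp at h⟩
    have := a.val_lt
    have := b.val_lt
    rw [sub_eq_add_neg, val_add, val_neg_of_ne_zero, Nat.mod_eq_of_lt (by omega)]
    omega

lemma val_lt_val_iff_eq_zero_or {u d : ZMod n} (hd : d ≠ 0) :
    u.val < d.val ↔ u = 0 ∨ (u - 1).val < (d - 1).val := by
  -- `(1 : ZMod 1).val = 0`, so the case `n = 1` is carried along as a disjunct for `omega`
  have := (ne_or_eq n 1).imp_left val_one''
  have := u.val_lt
  have := d.val_lt
  rw [← val_ne_zero] at hd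
  rw [val_sub_eq_ite_s13, val_sub_eq_ite_s13, ← val_eq_zero]
  split_ifs <;> omega

lemma val_sub_one_sub_lt_val_iff (d u : ZMod n) : (d - 1 - u).val < d.val ↔ u.val < d.val := by
  have := (ne_or_eq n 1).imp_left val_one''
  have := u.val_lt
  have := d.val_lt
  have := (d - 1).val_lt
  rw [val_sub_eq_ite_s13, val_sub_eq_ite_s13 d]
  split_ifs <;> omega

lemma val_le_val_neg_one (a : ZMod n) : a.val ≤ (-1 : ZMod n).val := by
  have := (ne_or_eq n 1).imp_left val_one''
  have := a.val_lt
  rw [← zero_sub, val_sub_eq_ite_s13, val_zero]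
  split_ifs <;> omega

end ZMod

section CyclicInterval

variable {n : ℕ} [NeZero n]

lemma mem_cycInterval {y x z : ZMod n} : z ∈ cycInterval n y x ↔ (z - y).val < (x - y).val := by
  simp [cycInterval]

@[simp] lemma cycInterval_self (x : ZMod n) : cycInterval n x x = ∅ := by
  ext z; simp [mem_cycInterval]

lemma right_notMem_cycInterval (y x : ZMod n) : x ∉ cycInterval n y x := by
  simp [mem_cycInterval]

lemma left_notMem_cycInterval_succ (y x : ZMod n) : y ∉ cycInterval n (y + 1) x := by
  rw [mem_cycInterval, sub_add_cancel_left, not_lt]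
  exact ZMod.val_le_val_neg_one _

lemma cycInterval_eq_insert_succ {y x : ZMod n} (hyx : y ≠ x) :
    cycInterval n y x = insert y (cycInterval n (y + 1) x) := by
  ext z
  rw [mem_insert, mem_cycInterval, mem_cycInterval, sub_add_eq_sub_sub, sub_add_eq_sub_sub,
    ZMod.val_lt_val_iff_eq_zero_or (sub_ne_zero.mpr hyx.symm), sub_eq_zero]

lemma compl_cycInterval_succ_left (x y : ZMod n) :
    (cycInterval n (x + 1) y)ᶜ = insert x (cycInterval n y x) := by
  ext z
  have := (ne_or_eq n 1).imp_left ZMod.val_one''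
  have := (z - x).val_lt
  have := (y - x).val_lt
  rw [mem_compl, mem_insert, mem_cycInterval, mem_cycInterval, sub_add_eq_sub_sub,
    sub_add_eq_sub_sub, ← sub_eq_zero (a := z), ← ZMod.val_eq_zero,
    show z - y = (z - x) - (y - x) by ring, show x - y = 0 - (y - x) by ring]
  rw [ZMod.val_sub_eq_ite_s13 (z - x), ZMod.val_sub_eq_ite_s13 (y - x), ZMod.val_sub_eq_ite_s13 (z - x),
    ZMod.val_sub_eq_ite_s13 0, ZMod.val_zero]
  split_ifs <;> omega

lemma image_subLeft_cycInterval_succ (a b : ZMod n) :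
    (cycInterval n (a + 1) (b + 1)).image (Equiv.subLeft (-1)) =
      cycInterval n (-1 - b) (-1 - a) := by
  ext z
  obtain ⟨w, rfl⟩ := (Equiv.subLeft (-1 : ZMod n)).surjective z
  rw [(Equiv.injective _).mem_finset_image, Equiv.subLeft_apply, mem_cycInterval, mem_cycInterval,
    show b + 1 - (a + 1) = b - a by ring, show -1 - a - (-1 - b) = b - a by ring,
    show -1 - w - (-1 - b) = (b - a) - 1 - (w - (a + 1)) by ring,
    ZMod.val_sub_one_sub_lt_val_iff]

end CyclicInterval

section Imbalance

variable {α β : Type*} [DecidableEq α] [Fintype α] [DecidableEq β] [Fintype β]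

def imbalance (S W : Finset α) : ℤ := #(W ∩ Sᶜ) - #(W ∩ S)

@[simp] lemma imbalance_empty (S : Finset α) : imbalance S ∅ = 0 := by
  simp [imbalance]

lemma imbalance_insert {S W : Finset α} {a : α} (ha : a ∉ W) :
    imbalance S (insert a W) = imbalance S W + if a ∈ S then -1 else 1 := by
  unfold imbalance
  by_cases h : a ∈ S
  · rw [insert_inter_of_mem h, insert_inter_of_notMem (notMem_compl.mpr h),
      card_insert_of_notMem (fun h' => ha (mem_inter.mp h').1), if_pos h]
    push_cast; ring
  · rw [insert_inter_of_notMem h, insert_inter_of_mem (mem_compl.mpr h),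
      card_insert_of_notMem (fun h' => ha (mem_inter.mp h').1), if_neg h]
    push_cast; ring

lemma imbalance_compl (S W : Finset α) : imbalance S Wᶜ = imbalance S univ - imbalance S W := by
  have key (T : Finset α) : (#(Wᶜ ∩ T) : ℤ) = #(univ ∩ T) - #(W ∩ T) := by
    rw [eq_sub_iff_add_eq, ← Nat.cast_add, ← card_union_of_disjoint, ← union_inter_distrib_right,
      union_comm, union_compl]
    exact disjoint_compl_left.mono inter_subset_left inter_subset_left
  simp only [imbalance, key]
  ring

lemma imbalance_compl_left (S W : Finset α) : imbalance Sᶜ W = -imbalance S W := by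
  simp [imbalance]

lemma imbalance_insert_left {S W : Finset α} {a : α} (ha : a ∉ W) :
    imbalance (insert a S) W = imbalance S W := by
  rw [imbalance, imbalance, compl_insert, inter_insert_of_notMem ha, inter_erase,
    erase_eq_of_notMem (fun h => ha (mem_inter.mp h).1)]

lemma Finset.compl_image_equiv (e : α ≃ β) (S : Finset α) : (S.image e)ᶜ = Sᶜ.image e := by
  ext b
  obtain ⟨a, rfl⟩ := e.surjective b
  simp [e.injective.mem_finset_image]

lemma imbalance_image (e : α ≃ β) (S W : Finset α) :
    imbalance (S.image e) (W.image e) = imbalance S W := by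
  simp only [imbalance, compl_image_equiv, ← image_inter _ _ e.injective,
    card_image_of_injective _ e.injective]

end Imbalance

theorem card_pos_down_steps_eq_card_pos_up_steps {α : Type*} [Fintype α] [DecidableEq α]
    (σ : Equiv.Perm α) (f : α → ℤ) {U D : Finset α}
    (hU : ∀ y ∈ U, f y = f (σ y) + 1) (hD : ∀ y ∈ D, f (σ y) = f y + 1)
    (hfix : ∀ y, y ∉ U → y ∉ D → f (σ y) = f y) :
    #(U.filter fun y => 0 < f y) = #(D.filter fun y => 0 < f (σ y)) := by
  -- each step changes `max f 0` by the difference of the two indicators, and these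
  -- changes cancel once summed around the permutation `σ`
  have step (y : α) : ((if y ∈ U then (if 0 < f y then 1 else 0) else 0) : ℤ)
      - (if y ∈ D then (if 0 < f (σ y) then 1 else 0) else 0)
      = max (f y) 0 - max (f (σ y)) 0 := by
    by_cases hyU : y ∈ U
    · have hyD : y ∉ D := fun hyD => by linarith [hU y hyU, hD y hyD]
      rw [if_pos hyU, if_neg hyD, hU y hyU]
      split_ifs <;> omega
    by_cases hyD : y ∈ D
    · rw [if_neg hyU, if_pos hyD, hD y hyD]
      split_ifs <;> omega
    · rw [if_neg hyU, if_neg hyD, hfix y hyU hyD]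
      ring
  have total : ∑ y, (max (f y) 0 - max (f (σ y)) 0) = 0 := by
    rw [sum_sub_distrib, Equiv.sum_comp σ (fun y => max (f y) 0), sub_self]
  simp only [← step, sum_sub_distrib, sum_ite_mem, univ_inter, sum_boole] at total
  exact_mod_cast sub_eq_zero.mp total

section LexColor

variable {n : ℕ} [NeZero n]

lemma lexColor_eq_card_filter_imbalance (S : Finset (ZMod n)) (x : ZMod n) :
    lexColor n S x = #((Sᶜ.erase x).filter fun y => 0 < imbalance S (cycInterval n y x)) := by
  simp only [lexColor, imbalance, sub_pos, Nat.cast_lt]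

lemma imbalance_cycInterval_of_ne (S : Finset (ZMod n)) {y x : ZMod n} (hyx : y ≠ x) :
    imbalance S (cycInterval n y x) =
      imbalance S (cycInterval n (y + 1) x) + if y ∈ S then -1 else 1 := by
  rw [cycInterval_eq_insert_succ hyx, imbalance_insert (left_notMem_cycInterval_succ y x)]

lemma imbalance_cycInterval_succ_self {S : Finset (ZMod n)} {x : ZMod n} (hx : x ∉ S)
    (hS : imbalance S univ = 1) : imbalance S (cycInterval n (x + 1) x) = 0 := by
  rw [← compl_compl (cycInterval n (x + 1) x), compl_cycInterval_succ_left, cycInterval_self,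
    imbalance_compl, imbalance_insert (notMem_empty x), if_neg hx, hS, imbalance_empty]
  norm_num

lemma lexColor_eq_card_filter_succ {S : Finset (ZMod n)} {x : ZMod n} (hx : x ∉ S)
    (hS : imbalance S univ = 1) :
    lexColor n S x = #(S.filter fun s => 0 < imbalance S (cycInterval n (s + 1) x)) := by
  rw [lexColor_eq_card_filter_imbalance]
  refine card_pos_down_steps_eq_card_pos_up_steps (Equiv.addRight 1) _ ?_ ?_ ?_
  · intro y hy
    obtain ⟨hyx, hyS⟩ := mem_erase.mp hy
    rw [imbalance_cycInterval_of_ne S hyx, if_neg (mem_compl.mp hyS)]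
    rfl
  · intro y hy
    rw [imbalance_cycInterval_of_ne S (ne_of_mem_of_not_mem hy hx), if_pos hy]
    simp
  · intro y hyU hyS
    obtain rfl : y = x := by
      by_contra hyx
      exact hyU (mem_erase.mpr ⟨hyx, mem_compl.mpr hyS⟩)
    rw [Equiv.coe_addRight, imbalance_cycInterval_succ_self hx hS, cycInterval_self,
      imbalance_empty]

lemma aleph_eq_image (A : Finset (ZMod n)) : aleph n A = Aᶜ.image (Equiv.subLeft (-1)) := by
  simp only [aleph, ZMod.natCast_self, zero_sub]
  rfl

lemma imbalance_aleph_insert_cycInterval {S : Finset (ZMod n)} {x : ZMod n} (hx : x ∉ S)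
    (hS : imbalance S univ = 1) (s : ZMod n) :
    imbalance (aleph n (insert x S)) (cycInterval n (-1 - s) (-1 - x)) =
      imbalance S (cycInterval n (s + 1) x) := by
  have hxI : x ∉ cycInterval n (s + 1) x := right_notMem_cycInterval _ _
  have hA : imbalance (insert x S) univ = imbalance S univ - 2 := by
    have h := imbalance_insert (S := S) (notMem_erase x univ)
    have h' := imbalance_insert (S := insert x S) (notMem_erase x univ)
    rw [insert_erase (mem_univ x)] at h h'
    rw [h', h, imbalance_insert_left (notMem_erase x univ), if_pos (mem_insert_self x S),
      if_neg hx]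
    ring
  calc imbalance (aleph n (insert x S)) (cycInterval n (-1 - s) (-1 - x))
      = imbalance ((insert x S)ᶜ.image (Equiv.subLeft (-1)))
          ((cycInterval n (x + 1) (s + 1)).image (Equiv.subLeft (-1))) := by
        rw [aleph_eq_image, image_subLeft_cycInterval_succ]
    _ = -imbalance (insert x S) (cycInterval n (x + 1) (s + 1)) := by
        rw [imbalance_image, imbalance_compl_left]
    _ = -(imbalance (insert x S) univ
          - imbalance (insert x S) (insert x (cycInterval n (s + 1) x))) := by
        rw [← compl_compl (cycInterval n (x + 1) (s + 1)), compl_cycInterval_succ_left,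
          imbalance_compl]
    _ = imbalance S (cycInterval n (s + 1) x) := by
        rw [hA, imbalance_insert hxI, imbalance_insert_left hxI, if_pos (mem_insert_self x S), hS]
        ring

lemma lexColor_aleph_insert {S : Finset (ZMod n)} {x : ZMod n} (hx : x ∉ S)
    (hS : imbalance S univ = 1) :
    lexColor n (aleph n (insert x S)) (-1 - x) =
      #(S.filter fun s => 0 < imbalance S (cycInterval n (s + 1) x)) := by
  set r := Equiv.subLeft (-1 : ZMod n)
  have hrx : r x ∉ S.image r := fun h => hx (r.injective.mem_finset_image.mp h)
  have hsupp : (aleph n (insert x S))ᶜ.erase (r x) = S.image r := by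
    rw [aleph_eq_image, compl_image_equiv, compl_compl, image_insert, erase_insert hrx]
  rw [lexColor_eq_card_filter_imbalance, show -1 - x = r x from rfl, hsupp, filter_image,
    card_image_of_injective _ r.injective]
  refine congrArg card (filter_congr fun s _ => ?_)
  rw [show r s = -1 - s from rfl, show r x = -1 - x from rfl,
    imbalance_aleph_insert_cycInterval hx hS]

end LexColor

theorem stmt13_general (k : ℕ) (S : Finset (ZMod (2 * k + 1))) (hS : S.card = k)
    (x : ZMod (2 * k + 1)) (hx : x ∉ S) :
    lexColor (2 * k + 1) S x =
      lexColor (2 * k + 1) (aleph (2 * k + 1) (insert x S))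
        (((2 * k + 1 : ℕ) : ZMod (2 * k + 1)) - 1 - x) := by
  have hbalanced : imbalance S univ = 1 := by
    simp only [imbalance, univ_inter, card_compl, ZMod.card, hS]
    omega
  rw [ZMod.natCast_self, zero_sub, lexColor_aleph_insert hx hbalanced,
    lexColor_eq_card_filter_succ hx hbalanced]

/-- The lexical color is invariant under complemented reversal:
`c(x, S) = c(n−1−x, ℵ(S ∪ {x}))`. -/
theorem stmt13 (k : ℕ) (hk : 1 ≤ k) (S : Finset (ZMod (2 * k + 1))) (hS : S.card = k)
    (x : ZMod (2 * k + 1)) (hx : x ∉ S) :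
    lexColor (2 * k + 1) S x =
      lexColor (2 * k + 1) (aleph (2 * k + 1) (insert x S))
        (((2 * k + 1 : ℕ) : ZMod (2 * k + 1)) - 1 - x) :=
  stmt13_general k S hS x hx
end

section
/- Let G be a simple graph and let C₁ and C₂ be two vertex-disjoint cycles in G. Suppose u, u′, v, v′ are four distinct vertices of C₁ such that u u′ and v v′ are edges of C₁ and the graph C₁ minus the two edges u u′ and v v′ consists of two paths, one with endpoints u′ and v and the other with endpoints u and v′. Suppose u″ v″ is an edge of C₂, and suppose u v, u′ u″ and v′ v″ are edges of G not belonging to C₁ or C₂. Then the subgraph whose edge set is the symmetric difference of E(C₁) ∪ E(C₂) with the edge set {u u′, v v′, u″ v″, u v, u′ u″, v′ v″} of the 6-cycle (u, u′, u″, v″, v′, v) is a single cycle whose vertex set is V(C₁) ∪ V(C₂). -/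
/-!
Read the 6-cycle as the hexagon `u'' v'' v' v u u'`: its edges alternately lie in
`E = E(C₁) ∪ E(C₂)` (`u''v''`, `v'v`, `uu'`) and outside `E`. Taking the symmetric difference with
an alternating hexagon preserves every degree, since each hexagon vertex trades one incident edge
of `E` for one outside `E`; so the result is 2-regular. It is also connected: `C₁ ⊔ C₂` becomes
connected once `u'u''` is added, every edge off the hexagon survives, and the endpoints of each
hexagon edge stay joined, because the paths `u' ~ v` and `u ~ v'` of `C₁` avoid the removed edges
and are linked to each other and to `C₂` by the new edges `uv`, `u'u''`, `v'v''`.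
-/

def IsCycleSubgraph {V : Type*} {G : SimpleGraph V} (H : G.Subgraph) : Prop :=
  H.Connected ∧ ∀ v ∈ H.verts, (H.neighborSet v).ncard = 2

theorem Set.ncard_symmDiff_pair {α : Type*} {s : Set α} {a c : α} (ha : a ∈ s) (hc : c ∉ s) :
    (symmDiff s {a, c}).ncard = s.ncard := by
  have : symmDiff s {a, c} = insert c (s \ {a}) := by
    ext x
    have hac : a ≠ c := fun h => hc (h ▸ ha)
    simp only [Set.mem_symmDiff, Set.mem_insert_iff, Set.mem_singleton_iff, Set.mem_sdiff]
    grind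
  rw [this, Set.ncard_exchange hc ha]

namespace SimpleGraph

variable {V : Type*}

def hexagon (a b c d e f : V) : Set (Sym2 V) :=
  {s(a, b), s(b, c), s(c, d), s(d, e), s(e, f), s(f, a)}

structure IsAlternatingHexagon (E : Set (Sym2 V)) (a b c d e f : V) : Prop where
  nodup : [a, b, c, d, e, f].Nodup
  mem_ab : s(a, b) ∈ E
  mem_cd : s(c, d) ∈ E
  mem_ef : s(e, f) ∈ E
  notMem_bc : s(b, c) ∉ E
  notMem_de : s(d, e) ∉ E
  notMem_fa : s(f, a) ∉ E

section hexagon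

variable {a b c d e f : V}

lemma hexagon_rotate : hexagon a b c d e f = hexagon c d e f a b := by
  ext
  simp only [hexagon, Set.mem_insert_iff, Set.mem_singleton_iff]
  tauto

lemma hexagon_reflect : hexagon a b c d e f = hexagon b a f e d c := by
  ext
  simp only [hexagon, Set.mem_insert_iff, Set.mem_singleton_iff, Sym2.eq_swap]
  tauto

lemma forall_of_mk_mem_hexagon {P : V → V → Prop} (hP : ∀ ⦃x y⦄, P x y → P y x) (hab : P a b)
    (hbc : P b c) (hcd : P c d) (hde : P d e) (hef : P e f) (hfa : P f a) {x y : V}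
    (h : s(x, y) ∈ hexagon a b c d e f) : P x y := by
  simp only [hexagon, Set.mem_insert_iff, Set.mem_singleton_iff, Sym2.eq_iff] at h
  rcases h with (⟨rfl, rfl⟩ | ⟨rfl, rfl⟩) | (⟨rfl, rfl⟩ | ⟨rfl, rfl⟩) | (⟨rfl, rfl⟩ | ⟨rfl, rfl⟩) |
    (⟨rfl, rfl⟩ | ⟨rfl, rfl⟩) | (⟨rfl, rfl⟩ | ⟨rfl, rfl⟩) | (⟨rfl, rfl⟩ | ⟨rfl, rfl⟩)
  all_goals first | assumption | exact hP ‹_›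

lemma setOf_mk_mem_hexagon (h : [a, b, c, d, e, f].Nodup) :
    {x | s(a, x) ∈ hexagon a b c d e f} = {b, f} := by
  simp only [List.nodup_cons, List.mem_cons, List.not_mem_nil] at h
  ext x
  simp only [hexagon, Set.mem_ofPred_eq, Set.mem_insert_iff, Set.mem_singleton_iff, Sym2.eq_iff]
  grind

lemma mk_notMem_hexagon {w : V} (h : w ∉ [a, b, c, d, e, f]) (x : V) :
    s(w, x) ∉ hexagon a b c d e f := by
  simp only [List.mem_cons, List.not_mem_nil] at h
  simp only [hexagon, Set.mem_insert_iff, Set.mem_singleton_iff, Sym2.eq_iff]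
  grind

lemma Reachable.of_mk_mem_hexagon {K : SimpleGraph V} (hbc : K.Adj b c) (hde : K.Adj d e)
    (hfa : K.Adj f a) (hce : K.Reachable c e) (hdf : K.Reachable d f) {x y : V}
    (h : s(x, y) ∈ hexagon a b c d e f) : K.Reachable x y :=
  forall_of_mk_mem_hexagon (fun _ _ h => h.symm)
    (hfa.symm.reachable.trans (hdf.symm.trans (hde.reachable.trans
      (hce.symm.trans hbc.symm.reachable))))
    hbc.reachable (hce.trans hde.symm.reachable) hde.reachable (hde.symm.reachable.trans hdf)
    hfa.reachable h

namespace IsAlternatingHexagon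

variable {E : Set (Sym2 V)}

lemma rotate (h : IsAlternatingHexagon E a b c d e f) : IsAlternatingHexagon E c d e f a b :=
  ⟨(List.nodup_rotate.mpr h.nodup : ([a, b, c, d, e, f].rotate 2).Nodup), h.mem_cd, h.mem_ef,
    h.mem_ab, h.notMem_de, h.notMem_fa, h.notMem_bc⟩

lemma reflect (h : IsAlternatingHexagon E a b c d e f) : IsAlternatingHexagon E b a f e d c :=
  ⟨(List.nodup_rotate.mpr (List.nodup_reverse.mpr h.nodup) :
    ([a, b, c, d, e, f].reverse.rotate 4).Nodup), Sym2.eq_swap ▸ h.mem_ab,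
    Sym2.eq_swap ▸ h.mem_ef, Sym2.eq_swap ▸ h.mem_cd, Sym2.eq_swap ▸ h.notMem_fa,
    Sym2.eq_swap ▸ h.notMem_de, Sym2.eq_swap ▸ h.notMem_bc⟩

lemma inter_subset (h : IsAlternatingHexagon E a b c d e f) :
    hexagon a b c d e f ∩ E ⊆ {s(a, b), s(c, d), s(e, f)} := by
  rintro z ⟨hz, hzE⟩
  simp only [hexagon, Set.mem_insert_iff, Set.mem_singleton_iff] at hz
  rcases hz with rfl | rfl | rfl | rfl | rfl | rfl
  exacts [.inl rfl, (h.notMem_bc hzE).elim, .inr (.inl rfl), (h.notMem_de hzE).elim,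
    .inr (.inr rfl), (h.notMem_fa hzE).elim]

lemma ncard_setOf_mk_mem_symmDiff_left (h : IsAlternatingHexagon E a b c d e f) :
    {x | s(a, x) ∈ symmDiff E (hexagon a b c d e f)}.ncard = {x | s(a, x) ∈ E}.ncard := by
  have : {x | s(a, x) ∈ symmDiff E (hexagon a b c d e f)} =
      symmDiff {x | s(a, x) ∈ E} {b, f} := by
    rw [← setOf_mk_mem_hexagon h.nodup]
    rfl
  rw [this]
  exact Set.ncard_symmDiff_pair h.mem_ab
    (by rw [Set.mem_ofPred_eq, Sym2.eq_swap]; exact h.notMem_fa)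

lemma ncard_setOf_mk_mem_symmDiff (h : IsAlternatingHexagon E a b c d e f) (w : V) :
    {x | s(w, x) ∈ symmDiff E (hexagon a b c d e f)}.ncard = {x | s(w, x) ∈ E}.ncard := by
  by_cases hw : w ∈ [a, b, c, d, e, f]
  · simp only [List.mem_cons, List.not_mem_nil, or_false] at hw
    rcases hw with rfl | rfl | rfl | rfl | rfl | rfl
    · exact h.ncard_setOf_mk_mem_symmDiff_left
    · rw [hexagon_reflect]
      exact h.reflect.ncard_setOf_mk_mem_symmDiff_left
    · rw [hexagon_rotate]
      exact h.rotate.ncard_setOf_mk_mem_symmDiff_left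
    · rw [hexagon_rotate, hexagon_reflect]
      exact h.rotate.reflect.ncard_setOf_mk_mem_symmDiff_left
    · rw [hexagon_rotate, hexagon_rotate]
      exact h.rotate.rotate.ncard_setOf_mk_mem_symmDiff_left
    · rw [hexagon_rotate, hexagon_rotate, hexagon_reflect]
      exact h.rotate.rotate.reflect.ncard_setOf_mk_mem_symmDiff_left
  · congr 1
    ext x
    simp [Set.mem_symmDiff, mk_notMem_hexagon hw x]

end IsAlternatingHexagon

end hexagon

namespace Subgraph

variable {G : SimpleGraph V}

def symmDiffEdges (H : G.Subgraph) (Z : Set (Sym2 V)) (hZG : ∀ ⦃x y⦄, s(x, y) ∈ Z → G.Adj x y)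
    (hZH : ∀ ⦃x y⦄, s(x, y) ∈ Z → x ∈ H.verts) : G.Subgraph where
  verts := H.verts
  Adj x y := s(x, y) ∈ symmDiff H.edgeSet Z
  adj_sub h := by
    rcases Set.mem_symmDiff.mp h with ⟨h, -⟩ | ⟨h, -⟩
    exacts [H.adj_sub h, hZG h]
  edge_vert h := by
    rcases Set.mem_symmDiff.mp h with ⟨h, -⟩ | ⟨h, -⟩
    exacts [H.edge_vert h, hZH h]
  symm := ⟨fun x y h => by rwa [Sym2.eq_swap]⟩

lemma edgeSet_symmDiffEdges {H : G.Subgraph} {Z : Set (Sym2 V)}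
    {hZG : ∀ ⦃x y⦄, s(x, y) ∈ Z → G.Adj x y} {hZH : ∀ ⦃x y⦄, s(x, y) ∈ Z → x ∈ H.verts} :
    (H.symmDiffEdges Z hZG hZH).edgeSet = symmDiff H.edgeSet Z := by
  ext z
  induction z using Sym2.ind
  rfl

lemma ncard_neighborSet_sup_of_disjoint {H K : G.Subgraph} {n : ℕ}
    (hH : ∀ w ∈ H.verts, (H.neighborSet w).ncard = n)
    (hK : ∀ w ∈ K.verts, (K.neighborSet w).ncard = n) (hHK : Disjoint H.verts K.verts) :
    ∀ w ∈ (H ⊔ K).verts, ((H ⊔ K).neighborSet w).ncard = n := by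
  rintro w (hw | hw)
  · have : K.neighborSet w = ∅ :=
      Set.eq_empty_of_forall_notMem fun _ hx => hHK.notMem_of_mem_left hw (K.edge_vert hx)
    rw [neighborSet_sup, this, Set.union_empty, hH w hw]
  · have : H.neighborSet w = ∅ :=
      Set.eq_empty_of_forall_notMem fun _ hx => hHK.notMem_of_mem_right hw (H.edge_vert hx)
    rw [neighborSet_sup, this, Set.empty_union, hK w hw]

lemma reachable_coe_of_reachable_spanningCoe {H : G.Subgraph} {x y : V}
    (h : H.spanningCoe.Reachable x y) (hx : x ∈ H.verts) (hy : y ∈ H.verts) :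
    H.coe.Reachable ⟨x, hx⟩ ⟨y, hy⟩ := by
  obtain ⟨p⟩ := h
  induction p with
  | nil => rfl
  | cons hadj p ih =>
    have hb := H.edge_vert hadj.symm
    exact (show H.coe.Adj ⟨_, hx⟩ ⟨_, hb⟩ from hadj).reachable.trans (ih hb hy)

lemma Connected.of_forall_adj_reachable {H K : G.Subgraph} (hH : H.Connected)
    (hHK : H.verts = K.verts) (hadj : ∀ ⦃x y⦄, H.Adj x y → K.spanningCoe.Reachable x y) :
    K.Connected := by
  have hlift : ∀ ⦃x y⦄, H.spanningCoe.Reachable x y → K.spanningCoe.Reachable x y := by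
    simp only [reachable_eq_reflTransGen] at hadj ⊢
    exact Relation.reflTransGen_closed hadj
  rw [Subgraph.connected_iff, Subgraph.preconnected_iff]
  refine ⟨fun ⟨x, hx⟩ ⟨y, hy⟩ => reachable_coe_of_reachable_spanningCoe (hlift ?_) hx hy,
    hHK ▸ hH.nonempty⟩
  rw [← hHK] at hx hy
  exact (hH ⟨x, hx⟩ ⟨y, hy⟩).map ⟨Subtype.val, id⟩

lemma Connected.symmDiffEdges {H : G.Subgraph} {Z : Set (Sym2 V)}
    {hZG : ∀ ⦃x y⦄, s(x, y) ∈ Z → G.Adj x y} {hZH : ∀ ⦃x y⦄, s(x, y) ∈ Z → x ∈ H.verts}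
    {x y : V} (hxy : G.Adj x y) (hxyZ : s(x, y) ∈ Z) (hconn : (H ⊔ G.subgraphOfAdj hxy).Connected)
    (hZ : ∀ ⦃x y⦄, s(x, y) ∈ Z → (H.symmDiffEdges Z hZG hZH).spanningCoe.Reachable x y) :
    (H.symmDiffEdges Z hZG hZH).Connected := by
  have hverts : (H ⊔ G.subgraphOfAdj hxy).verts = H.verts := by
    rw [verts_sup, subgraphOfAdj_verts]
    exact Set.union_eq_left.mpr (Set.pair_subset (hZH hxyZ) (hZH (Sym2.eq_swap ▸ hxyZ)))
  refine hconn.of_forall_adj_reachable hverts fun v w hvw => ?_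
  by_cases hvwZ : s(v, w) ∈ Z
  · exact hZ hvwZ
  · refine Adj.reachable (Set.mem_symmDiff.mpr (.inl ⟨?_, hvwZ⟩))
    rcases hvw with hvw | hvw
    · exact hvw
    · exact absurd ((show s(x, y) = s(v, w) from hvw) ▸ hxyZ) hvwZ

end Subgraph

namespace IsAlternatingHexagon

variable {G : SimpleGraph V} {H : G.Subgraph} {a b c d e f : V}

lemma mem_verts (h : IsAlternatingHexagon H.edgeSet a b c d e f) ⦃x y : V⦄
    (hxy : s(x, y) ∈ hexagon a b c d e f) : x ∈ H.verts := by
  have hab : H.Adj a b := h.mem_ab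
  have hcd : H.Adj c d := h.mem_cd
  have hef : H.Adj e f := h.mem_ef
  exact (forall_of_mk_mem_hexagon (P := fun x y => x ∈ H.verts ∧ y ∈ H.verts)
    (fun _ _ h => h.symm) ⟨H.edge_vert hab, H.edge_vert hab.symm⟩
    ⟨H.edge_vert hab.symm, H.edge_vert hcd⟩ ⟨H.edge_vert hcd, H.edge_vert hcd.symm⟩
    ⟨H.edge_vert hcd.symm, H.edge_vert hef⟩ ⟨H.edge_vert hef, H.edge_vert hef.symm⟩
    ⟨H.edge_vert hef.symm, H.edge_vert hab⟩ hxy).1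

lemma adj (h : IsAlternatingHexagon H.edgeSet a b c d e f) (hbc : G.Adj b c) (hde : G.Adj d e)
    (hfa : G.Adj f a) ⦃x y : V⦄ (hxy : s(x, y) ∈ hexagon a b c d e f) : G.Adj x y :=
  forall_of_mk_mem_hexagon (fun _ _ h => h.symm) (H.adj_sub h.mem_ab) hbc (H.adj_sub h.mem_cd)
    hde (H.adj_sub h.mem_ef) hfa hxy

theorem isCycleSubgraph_symmDiffEdges (h : IsAlternatingHexagon H.edgeSet a b c d e f)
    (hH : ∀ w ∈ H.verts, (H.neighborSet w).ncard = 2)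
    (hbc : G.Adj b c) (hde : G.Adj d e) (hfa : G.Adj f a)
    (hconn : (H ⊔ G.subgraphOfAdj hfa).Connected)
    (hce : (H.deleteEdges {s(a, b), s(c, d), s(e, f)}).spanningCoe.Reachable c e)
    (hdf : (H.deleteEdges {s(a, b), s(c, d), s(e, f)}).spanningCoe.Reachable d f) :
    IsCycleSubgraph (H.symmDiffEdges (hexagon a b c d e f) (h.adj hbc hde hfa) h.mem_verts) := by
  set C := H.symmDiffEdges (hexagon a b c d e f) (h.adj hbc hde hfa) h.mem_verts
  have hle : (H.deleteEdges {s(a, b), s(c, d), s(e, f)}).spanningCoe ≤ C.spanningCoe :=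
    fun _ _ ⟨hxy, hD⟩ => Set.mem_symmDiff.mpr (.inl ⟨hxy, fun hZ => hD (h.inter_subset ⟨hZ, hxy⟩)⟩)
  have hadj {x y : V} (hZ : s(x, y) ∈ hexagon a b c d e f) (hH : s(x, y) ∉ H.edgeSet) :
      C.spanningCoe.Adj x y :=
    Set.mem_symmDiff.mpr (.inr ⟨hZ, hH⟩)
  refine ⟨Subgraph.Connected.symmDiffEdges hfa (by simp [hexagon]) hconn fun x y hxy => ?_,
    fun w hw => (h.ncard_setOf_mk_mem_symmDiff w).trans (hH w hw)⟩
  exact Reachable.of_mk_mem_hexagon (hadj (by simp [hexagon]) h.notMem_bc)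
    (hadj (by simp [hexagon]) h.notMem_de) (hadj (by simp [hexagon]) h.notMem_fa)
    (hce.mono hle) (hdf.mono hle) hxy

end IsAlternatingHexagon

lemma isAlternatingHexagon_sup {G : SimpleGraph V} {C₁ C₂ : G.Subgraph}
    (hdisj : Disjoint C₁.verts C₂.verts) {u u' v v' u'' v'' : V} (hdist : [u, u', v, v'].Nodup)
    (huu' : C₁.Adj u u') (hvv' : C₁.Adj v v') (hC₂e : C₂.Adj u'' v'')
    (huv1 : ¬C₁.Adj u v) (huv2 : ¬C₂.Adj u v) (hu'u''1 : ¬C₁.Adj u' u'') (hu'u''2 : ¬C₂.Adj u' u'')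
    (hv'v''1 : ¬C₁.Adj v' v'') (hv'v''2 : ¬C₂.Adj v' v'') :
    IsAlternatingHexagon (C₁ ⊔ C₂).edgeSet u'' v'' v' v u u' where
  nodup := by
    have hu'' := hdisj.notMem_of_mem_right (C₂.edge_vert hC₂e)
    have hv'' := hdisj.notMem_of_mem_right (C₂.edge_vert hC₂e.symm)
    have := C₁.edge_vert huu'
    have := C₁.edge_vert huu'.symm
    have := C₁.edge_vert hvv'
    have := C₁.edge_vert hvv'.symm
    have := hC₂e.ne
    simp only [List.nodup_cons, List.mem_cons, List.not_mem_nil] at hdist ⊢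
    grind
  mem_ab := .inr hC₂e
  mem_cd := .inl hvv'.symm
  mem_ef := .inl huu'
  notMem_bc := by rw [Sym2.eq_swap]; exact fun h => h.elim hv'v''1 hv'v''2
  notMem_de := by rw [Sym2.eq_swap]; exact fun h => h.elim huv1 huv2
  notMem_fa := fun h => h.elim hu'u''1 hu'u''2

end SimpleGraph

open SimpleGraph Subgraph in
/-- Let `C₁, C₂` be vertex-disjoint cycles of `G`; let `u u'` and `v v'` be edges of
`C₁` such that `C₁` minus these two edges consists of two paths, one joining `u'` to
`v` and the other joining `u` to `v'`; let `u'' v''` be an edge of `C₂`; and let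
`u v`, `u' u''`, `v' v''` be edges of `G` lying on neither cycle.  Then the subgraph
whose edge set is the symmetric difference of `E(C₁) ∪ E(C₂)` with the edge set of
the 6-cycle `(u, u', u'', v'', v', v)` is a single cycle on the vertex set
`V(C₁) ∪ V(C₂)`. -/
theorem stmt15 {V : Type*} (G : SimpleGraph V) (C₁ C₂ : G.Subgraph)
    (hC₁ : IsCycleSubgraph C₁) (hC₂ : IsCycleSubgraph C₂)
    (hdisj : Disjoint C₁.verts C₂.verts)
    (u u' v v' u'' v'' : V)
    (hdist : [u, u', v, v'].Pairwise (· ≠ ·))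
    (huu' : C₁.Adj u u') (hvv' : C₁.Adj v v')
    (hpath1 : ((C₁.deleteEdges {s(u, u'), s(v, v')}).spanningCoe).Reachable u' v)
    (hpath2 : ((C₁.deleteEdges {s(u, u'), s(v, v')}).spanningCoe).Reachable u v')
    (hC₂e : C₂.Adj u'' v'')
    (huv : G.Adj u v) (huv1 : ¬ C₁.Adj u v) (huv2 : ¬ C₂.Adj u v)
    (hu'u'' : G.Adj u' u'') (hu'u''1 : ¬ C₁.Adj u' u'') (hu'u''2 : ¬ C₂.Adj u' u'')
    (hv'v'' : G.Adj v' v'') (hv'v''1 : ¬ C₁.Adj v' v'') (hv'v''2 : ¬ C₂.Adj v' v'') :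
    ∃ C : G.Subgraph,
      C.verts = C₁.verts ∪ C₂.verts ∧
      C.edgeSet = symmDiff (C₁.edgeSet ∪ C₂.edgeSet)
        {s(u, u'), s(v, v'), s(u'', v''), s(u, v), s(u', u''), s(v', v'')} ∧
      IsCycleSubgraph C := by
  have halt := isAlternatingHexagon_sup hdisj hdist huu' hvv' hC₂e huv1 huv2 hu'u''1 hu'u''2
    hv'v''1 hv'v''2
  have hdel : (C₁.deleteEdges {s(u, u'), s(v, v')}).spanningCoe ≤
      ((C₁ ⊔ C₂).deleteEdges {s(u'', v''), s(v', v), s(u, u')}).spanningCoe := by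
    rintro x y ⟨hxy, hD⟩
    refine ⟨.inl hxy, ?_⟩
    rintro (h | h | h)
    · have : C₁.Adj u'' v'' := show s(u'', v'') ∈ C₁.edgeSet from h ▸ hxy
      exact hdisj.notMem_of_mem_right (C₂.edge_vert hC₂e) (C₁.edge_vert this)
    · exact hD (.inr (h.trans Sym2.eq_swap))
    · exact hD (.inl h)
  have hconn : (C₁ ⊔ C₂ ⊔ G.subgraphOfAdj hu'u'').Connected := by
    rw [sup_right_comm]
    have hC₁u'u'' : (C₁ ⊔ G.subgraphOfAdj hu'u'').Connected :=
      connected_sup hC₁.1.preconnected (subgraphOfAdj_connected hu'u'').preconnected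
        ⟨u', C₁.edge_vert huu'.symm, by simp⟩
    exact connected_sup hC₁u'u''.preconnected hC₂.1.preconnected
      ⟨u'', .inr (by simp), C₂.edge_vert hC₂e⟩
  refine ⟨_, rfl, ?_, halt.isCycleSubgraph_symmDiffEdges
    (ncard_neighborSet_sup_of_disjoint hC₁.2 hC₂.2 hdisj) hv'v''.symm huv.symm hu'u'' hconn
    (hpath2.mono hdel).symm (hpath1.mono hdel).symm⟩
  rw [edgeSet_symmDiffEdges, Subgraph.edgeSet_sup]
  congr 1
  ext
  simp only [hexagon, Set.mem_insert_iff, Set.mem_singleton_iff, Sym2.eq_swap]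
  tauto
end
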